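/- arXiv:2511.10421 — 8 statements merged into one kernel-verified Lean document; each statement's English description precedes it below -/
import Mathlib

section
/- For each p ∈ (1,2], there exists a constant κ_p > 0 such that for every r > 0 and all vectors a, b in the open ball of radius r centered at the origin in ℝ^n, one has ⟨‖a‖^{p-2} a − ‖b‖^{p-2} b, a − b⟩ ≥ κ_p r^{p-2} ‖a − b‖². -/
open Real Metric
open scoped RealInnerProductSpace

-- Lemma B: mean value type inequality
lemma keyB (p r : ℝ) (hp1 : 1 < p) (hp2 : p ≤ 2) (hr : 0 < r)
    {α β : ℝ} (hβ : 0 ≤ β) (hβα : β ≤ α) (hαr : α ≤ r) :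
    (p - 1) * r ^ (p - 2) * (α - β) ≤ α ^ (p - 1) - β ^ (p - 1) := by
  set c : ℝ := (p - 1) * r ^ (p - 2) with hc
  have hmono : MonotoneOn (fun s : ℝ => s ^ (p - 1) - c * s) (Set.Icc 0 r) := by
    apply monotoneOn_of_deriv_nonneg (convex_Icc 0 r)
    · apply ContinuousOn.sub
      · exact fun x hx => (Real.continuousAt_rpow_const x (p-1) (Or.inr (by linarith))).continuousWithinAt
      · exact (continuous_const.mul continuous_id).continuousOn
    · intro x hx
      rw [interior_Icc] at hx
      exact ((Real.hasDerivAt_rpow_const (Or.inl (ne_of_gt hx.1))).sub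
        ((hasDerivAt_id x).const_mul c)).differentiableAt.differentiableWithinAt
    · intro x hx
      rw [interior_Icc] at hx
      have hd : deriv (fun s : ℝ => s ^ (p - 1) - c * s) x = (p - 1) * x ^ (p - 2) - c := by
        have := ((Real.hasDerivAt_rpow_const (p := p - 1) (Or.inl (ne_of_gt hx.1))).sub
          ((hasDerivAt_id x).const_mul c)).deriv
        simpa [mul_one, show p-1-1 = p-2 by ring, Pi.sub_def] using this
      rw [hd, hc, sub_nonneg]
      have : r ^ (p - 2) ≤ x ^ (p - 2) :=
        Real.rpow_le_rpow_of_nonpos hx.1 hx.2.le (by linarith)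
      nlinarith [this, sub_pos.mpr hp1]
  have h := hmono (Set.mem_Icc.mpr ⟨hβ, le_trans hβα hαr⟩)
    (Set.mem_Icc.mpr ⟨le_trans hβ hβα, hαr⟩) hβα
  simp only at h
  linarith

-- Lemma A
lemma keyA (p r : ℝ) (hp1 : 1 < p) (hp2 : p ≤ 2) (hr : 0 < r)
    {α : ℝ} (hα : 0 ≤ α) (hαr : α ≤ r) :
    r ^ (p - 2) * α ≤ α ^ (p - 1) := by
  rcases eq_or_lt_of_le hα with h0 | h0
  · rw [← h0, Real.zero_rpow (by linarith), mul_zero]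
  · have h1 : r ^ (p - 2) ≤ α ^ (p - 2) := Real.rpow_le_rpow_of_nonpos h0 hαr (by linarith)
    have h2 : α ^ (p - 1) = α ^ (p - 2) * α := by
      rw [← Real.rpow_add_one (ne_of_gt h0)]; ring_nf
    rw [h2]
    exact mul_le_mul_of_nonneg_right h1 hα

lemma keyC (p r : ℝ) (hp1 : 1 < p) (hp2 : p ≤ 2) (hr : 0 < r)
    {α β t : ℝ} (hβ : 0 ≤ β) (hβα : β ≤ α) (hαr : α ≤ r) (ht : |t| ≤ α * β) :
    (p-1) * r^(p-2) * (α^2 + β^2 - 2*t) ≤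
      α^(p-2)*α^2 + β^(p-2)*β^2 - (α^(p-2)+β^(p-2))*t := by
  obtain ⟨ht1, ht2⟩ := abs_le.mp ht
  have hR : (0:ℝ) < r^(p-2) := Real.rpow_pos_of_pos hr _
  have hα : 0 ≤ α := le_trans hβ hβα
  rcases eq_or_lt_of_le hα with h0 | h0
  · have hβ0 : β = 0 := le_antisymm (h0 ▸ hβα) hβ
    have ht0 : t = 0 := by
      rw [← h0, hβ0] at ht; simpa using abs_nonpos_iff.mp (by simpa using ht)
    rw [← h0, hβ0, ht0]; simp
  · have hA : α^(p-2) * α = α^(p-1) := by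
      rw [← Real.rpow_add_one (ne_of_gt h0)]; ring_nf
    have hB : β^(p-2) * β = β^(p-1) := by
      rcases eq_or_lt_of_le hβ with hb0 | hb0
      · rw [← hb0, Real.zero_rpow (by linarith : p - 1 ≠ 0), mul_zero]
      · rw [← Real.rpow_add_one (ne_of_gt hb0)]; ring_nf
    have e1 : α^(p-2)*α^2 = α^(p-1)*α := by rw [pow_two, ← mul_assoc, hA]
    have e2 : β^(p-2)*β^2 = β^(p-1)*β := by rw [pow_two, ← mul_assoc, hB]
    have e3 : α^(p-2)*(α*β) = α^(p-1)*β := by rw [← mul_assoc, hA]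
    have e4 : β^(p-2)*(α*β) = β^(p-1)*α := by rw [mul_comm α β, ← mul_assoc, hB]
    have Eminus : (p-1)*r^(p-2)*(α-β)^2 ≤ (α^(p-1) - β^(p-1))*(α-β) := by
      have h1 := keyB p r hp1 hp2 hr hβ hβα hαr
      nlinarith [sub_nonneg.mpr hβα]
    have Eplus : (p-1)*r^(p-2)*(α+β)^2 ≤ (α^(p-1) + β^(p-1))*(α+β) := by
      have h1 := keyA p r hp1 hp2 hr hα hαr
      have h2 := keyA p r hp1 hp2 hr hβ (le_trans hβα hαr)
      nlinarith [mul_nonneg (by linarith : (0:ℝ) ≤ α^(p-1) + β^(p-1) - r^(p-2)*(α+β))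
        (add_nonneg hα hβ),
        mul_nonneg (mul_nonneg (by linarith : (0:ℝ) ≤ 2 - p) hR.le) (sq_nonneg (α+β))]
    rcases le_or_gt 0 (α^(p-2) + β^(p-2) - 2*(p-1)*r^(p-2)) with hD | hD
    · nlinarith [mul_nonneg hD (by linarith : (0:ℝ) ≤ α*β - t), Eminus, e1, e2, e3, e4]
    · nlinarith [mul_nonneg (by linarith : (0:ℝ) ≤ -(α^(p-2) + β^(p-2) - 2*(p-1)*r^(p-2)))
        (by linarith : (0:ℝ) ≤ α*β + t), Eplus, e1, e2, e3, e4]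

lemma keyV (p r : ℝ) (hp1 : 1 < p) (hp2 : p ≤ 2) (hr : 0 < r) (n : ℕ)
    (a b : EuclideanSpace ℝ (Fin n)) (ha : ‖a‖ < r) (hba : ‖b‖ ≤ ‖a‖) :
    (p-1) * r^(p-2) * ‖a-b‖^2 ≤
      ⟪(‖a‖^(p-2)) • a - (‖b‖^(p-2)) • b, a - b⟫ := by
  have expand : ⟪(‖a‖^(p-2)) • a - (‖b‖^(p-2)) • b, a - b⟫ =
      ‖a‖^(p-2)*‖a‖^2 + ‖b‖^(p-2)*‖b‖^2 - (‖a‖^(p-2)+‖b‖^(p-2))*⟪a,b⟫ := by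
    simp only [inner_sub_left, inner_sub_right, real_inner_smul_left,
      real_inner_self_eq_norm_sq, real_inner_comm b a]
    ring
  have hns : ‖a-b‖^2 = ‖a‖^2 + ‖b‖^2 - 2*⟪a,b⟫ := by
    rw [norm_sub_sq_real]; ring
  rw [expand, hns]
  exact keyC p r hp1 hp2 hr (norm_nonneg b) hba ha.le (abs_real_inner_le_norm a b)

/-- For each `p ∈ (1,2]` there is `κ_p > 0` such that for all `r > 0` and
`a, b` in the open ball of radius `r` centered at the origin of `ℝ^n`,
`⟪‖a‖^(p-2) • a - ‖b‖^(p-2) • b, a - b⟫ ≥ κ_p r^(p-2) ‖a - b‖²`. -/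
theorem stmt0 (p : ℝ) (hp1 : 1 < p) (hp2 : p ≤ 2) :
    ∃ κ : ℝ, 0 < κ ∧ ∀ (n : ℕ) (r : ℝ), 0 < r →
      ∀ a b : EuclideanSpace ℝ (Fin n), a ∈ ball (0 : EuclideanSpace ℝ (Fin n)) r →
        b ∈ ball (0 : EuclideanSpace ℝ (Fin n)) r →
        κ * r ^ (p - 2) * ‖a - b‖ ^ 2 ≤
          ⟪(‖a‖ ^ (p - 2)) • a - (‖b‖ ^ (p - 2)) • b, a - b⟫ := by
  refine ⟨p - 1, by linarith, fun n r hr a b ha hb => ?_⟩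
  rw [mem_ball_zero_iff] at ha hb
  rcases le_total ‖b‖ ‖a‖ with h | h
  · exact keyV p r hp1 hp2 hr n a b ha h
  · have := keyV p r hp1 hp2 hr n b a hb h
    rw [norm_sub_rev] at this
    have hsym : ⟪(‖b‖^(p-2)) • b - (‖a‖^(p-2)) • a, b - a⟫ =
        ⟪(‖a‖^(p-2)) • a - (‖b‖^(p-2)) • b, a - b⟫ := by
      rw [← neg_sub ((‖a‖^(p-2)) • a) ((‖b‖^(p-2)) • b), ← neg_sub a b, inner_neg_neg]
    rw [hsym] at this
    exact this
end

section
/- Let f : ℝ^n → ℝ have ν-Hölder continuous gradient with constant L_ν for ν ∈ (0,1], g : ℝ^n → ℝ ∪ {+∞} be proper lsc, p = 1 + ν, φ := f + g, and let F_γ be the high-order forward–backward envelope. Then inf_{z ∈ ℝ^n} φ(z) = inf_{z ∈ ℝ^n} F_γ(z) for every γ ∈ (0, 1/L_ν). -/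
open Real
open scoped RealInnerProductSpace

/-- Descent lemma with sharp constant for ν-Hölder gradient. -/
lemma descent_lemma {n : ℕ} (ν L : ℝ) (hν : 0 < ν) (hL : 0 < L)
    (f : EuclideanSpace ℝ (Fin n) → ℝ) (hf : Differentiable ℝ f)
    (hH : ∀ x y : EuclideanSpace ℝ (Fin n),
      ‖gradient f y - gradient f x‖ ≤ L * ‖y - x‖ ^ ν)
    (x y : EuclideanSpace ℝ (Fin n)) :
    f y ≤ f x + ⟪gradient f x, y - x⟫ + L / (1 + ν) * ‖y - x‖ ^ (1 + ν) := by
  set v := y - x with hv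
  rcases eq_or_ne v 0 with h0 | h0
  · have hyx : y = x := by
      have := sub_eq_zero.mp h0
      exact this
    simp [hyx, hv, Real.zero_rpow (by positivity : (1:ℝ) + ν ≠ 0)]
  have hvpos : (0:ℝ) < ‖v‖ := norm_pos_iff.mpr h0
  -- continuity of the gradient
  have hgradcont : Continuous (gradient f) := by
    rw [continuous_iff_continuousAt]
    intro a
    rw [ContinuousAt, tendsto_iff_norm_sub_tendsto_zero]
    have h1 : Filter.Tendsto (fun z : EuclideanSpace ℝ (Fin n) => L * ‖z - a‖ ^ ν)
        (nhds a) (nhds 0) := by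
      have h2 : Filter.Tendsto (fun z : EuclideanSpace ℝ (Fin n) => ‖z - a‖)
          (nhds a) (nhds 0) := by
        have hc : Continuous fun z : EuclideanSpace ℝ (Fin n) => ‖z - a‖ :=
          (continuous_id.sub continuous_const).norm
        simpa using hc.tendsto a
      have h3 := ((Real.continuous_rpow_const hν.le).tendsto 0).comp h2
      have h4 := h3.const_mul L
      simpa [Real.zero_rpow hν.ne'] using h4
    exact squeeze_zero (fun z => norm_nonneg _) (fun z => hH a z) h1
  have key : ∀ t : ℝ, HasDerivAt (fun s => f (x + s • v)) ⟪gradient f (x + t • v), v⟫ t := by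
    intro t
    have h1 : HasDerivAt (fun s : ℝ => x + s • v) v t := by
      simpa using ((hasDerivAt_id t).smul_const v).const_add x
    have h2 := ((hf (x + t • v)).hasGradientAt).hasFDerivAt
    have h3 := h2.comp_hasDerivAt t h1
    simpa [InnerProductSpace.toDual_apply_apply, Function.comp_def] using h3
  have hcont : Continuous fun t : ℝ => ⟪gradient f (x + t • v), v⟫ :=
    ((hgradcont.comp (continuous_const.add (continuous_id.smul continuous_const))).inner
      continuous_const)
  have hint : (∫ t in (0:ℝ)..1, ⟪gradient f (x + t • v), v⟫) = f y - f x := by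
    have := intervalIntegral.integral_eq_sub_of_hasDerivAt (f := fun s => f (x + s • v))
      (f' := fun t => ⟪gradient f (x + t • v), v⟫) (a := 0) (b := 1)
      (fun t _ => key t) (hcont.intervalIntegrable 0 1)
    simpa [hv] using this
  -- pointwise bound on the integrand
  have hbound : ∀ t ∈ Set.Icc (0:ℝ) 1,
      ⟪gradient f (x + t • v), v⟫ ≤ ⟪gradient f x, v⟫ + L * t ^ ν * ‖v‖ ^ (1 + ν) := by
    intro t ht
    have h1 : ⟪gradient f (x + t • v) - gradient f x, v⟫ ≤
        ‖gradient f (x + t • v) - gradient f x‖ * ‖v‖ := real_inner_le_norm _ _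
    have h2 : ‖gradient f (x + t • v) - gradient f x‖ ≤ L * ‖t • v‖ ^ ν := by
      simpa using hH x (x + t • v)
    have h3 : ‖t • v‖ ^ ν = t ^ ν * ‖v‖ ^ ν := by
      rw [norm_smul, Real.norm_eq_abs, abs_of_nonneg ht.1, Real.mul_rpow ht.1 (norm_nonneg _)]
    have h4 : ‖v‖ ^ ν * ‖v‖ = ‖v‖ ^ (1 + ν) := by
      rw [add_comm, Real.rpow_add hvpos, Real.rpow_one]
    have h5 : ⟪gradient f (x + t • v) - gradient f x, v⟫ ≤ L * t ^ ν * ‖v‖ ^ (1 + ν) := by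
      calc ⟪gradient f (x + t • v) - gradient f x, v⟫
          ≤ ‖gradient f (x + t • v) - gradient f x‖ * ‖v‖ := h1
        _ ≤ L * ‖t • v‖ ^ ν * ‖v‖ := by
            exact mul_le_mul_of_nonneg_right h2 (norm_nonneg _)
        _ = L * t ^ ν * ‖v‖ ^ (1 + ν) := by rw [h3, ← h4]; ring
    have := inner_sub_left (𝕜 := ℝ) (gradient f (x + t • v)) (gradient f x) v
    linarith [h5, this.symm.le, this.le]
  -- integrability of the majorant
  have hrc : Continuous fun t : ℝ => L * t ^ ν * ‖v‖ ^ (1 + ν) :=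
    (continuous_const.mul (Real.continuous_rpow_const hν.le)).mul continuous_const
  have hmajcont : Continuous fun t : ℝ => ⟪gradient f x, v⟫ + L * t ^ ν * ‖v‖ ^ (1 + ν) :=
    continuous_const.add hrc
  have hmono := intervalIntegral.integral_mono_on (μ := MeasureTheory.volume) (by norm_num : (0:ℝ) ≤ 1)
    (hcont.intervalIntegrable 0 1) (hmajcont.intervalIntegrable 0 1) hbound
  -- compute the majorant integral
  have hcalc : (∫ t in (0:ℝ)..1, (⟪gradient f x, v⟫ + L * t ^ ν * ‖v‖ ^ (1 + ν))) =
      ⟪gradient f x, v⟫ + L / (1 + ν) * ‖v‖ ^ (1 + ν) := by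
    have hι : IntervalIntegrable (fun t : ℝ => L * t ^ ν * ‖v‖ ^ (1 + ν))
        MeasureTheory.volume 0 1 := hrc.intervalIntegrable 0 1
    rw [intervalIntegral.integral_add (intervalIntegrable_const) hι]
    have h6 : (∫ t in (0:ℝ)..1, L * t ^ ν * ‖v‖ ^ (1 + ν)) =
        (L * ‖v‖ ^ (1 + ν)) * ∫ t in (0:ℝ)..1, t ^ ν := by
      rw [← intervalIntegral.integral_const_mul]
      congr 1; ext t; ring
    rw [h6, integral_rpow (Or.inl (by linarith : (-1:ℝ) < ν))]
    simp [Real.zero_rpow (by positivity : ν + 1 ≠ 0)]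
    rw [div_eq_mul_inv, add_comm 1 ν]
    ring
  rw [hint] at hmono
  rw [hcalc] at hmono
  linarith

/-- `inf φ = inf F_γ` for every `γ ∈ (0, 1/L)`, where `F_γ` is HiFBE with `p = 1 + ν`. -/
theorem stmt7 (n : ℕ) (ν L : ℝ) (hν : ν ∈ Set.Ioc (0 : ℝ) 1) (hL : 0 < L)
    (f : EuclideanSpace ℝ (Fin n) → ℝ) (hf : Differentiable ℝ f)
    (hH : ∀ x y : EuclideanSpace ℝ (Fin n),
      ‖gradient f y - gradient f x‖ ≤ L * ‖y - x‖ ^ ν)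
    (g : EuclideanSpace ℝ (Fin n) → EReal)
    (hproper_top : ∃ x, g x ≠ ⊤) (hproper_bot : ∀ x, g x ≠ ⊥)
    (hlsc : LowerSemicontinuous g)
    (p : ℝ) (hp : p = 1 + ν)
    (γ : ℝ) (hγ : γ ∈ Set.Ioo (0 : ℝ) (1 / L)) :
    (⨅ z : EuclideanSpace ℝ (Fin n), ((f z : ℝ) : EReal) + g z) =
      ⨅ x : EuclideanSpace ℝ (Fin n), ⨅ y : EuclideanSpace ℝ (Fin n),
        ((f x + ⟪gradient f x, y - x⟫ + 1 / (p * γ) * ‖x - y‖ ^ p : ℝ) : EReal) + g y := by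
  obtain ⟨hν0, hν1⟩ := hν
  obtain ⟨hγ0, hγ1⟩ := hγ
  subst hp
  have hp0 : 0 < 1 + ν := by linarith
  apply le_antisymm
  · refine le_iInf fun x => le_iInf fun y => ?_
    have hLγ : L / (1 + ν) ≤ 1 / ((1 + ν) * γ) := by
      have hLγ' : L < 1 / γ := by
        rw [lt_div_iff₀ hγ0]
        calc L * γ < L * (1 / L) := by exact mul_lt_mul_of_pos_left hγ1 hL
          _ = 1 := by field_simp
      have hLγ'' : L * γ < 1 := by
        have := mul_lt_mul_of_pos_right hLγ' hγ0
        rwa [one_div, inv_mul_cancel₀ hγ0.ne'] at this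
      rw [div_le_div_iff₀ (by linarith) (by positivity)]
      nlinarith [mul_pos hγ0 hν0]
    have hfy : f y ≤ f x + ⟪gradient f x, y - x⟫ + 1 / ((1 + ν) * γ) * ‖x - y‖ ^ (1 + ν) := by
      have hd := descent_lemma ν L hν0 hL f hf hH x y
      have hnorm : ‖x - y‖ = ‖y - x‖ := norm_sub_rev x y
      rw [hnorm]
      have : L / (1 + ν) * ‖y - x‖ ^ (1 + ν) ≤ 1 / ((1 + ν) * γ) * ‖y - x‖ ^ (1 + ν) :=
        mul_le_mul_of_nonneg_right hLγ (Real.rpow_nonneg (norm_nonneg _) _)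
      linarith
    calc (⨅ z : EuclideanSpace ℝ (Fin n), ((f z : ℝ) : EReal) + g z)
        ≤ ((f y : ℝ) : EReal) + g y := iInf_le _ y
      _ ≤ ((f x + ⟪gradient f x, y - x⟫ + 1 / ((1 + ν) * γ) * ‖x - y‖ ^ (1 + ν) : ℝ) : EReal) + g y :=
        add_le_add_left (EReal.coe_le_coe_iff.mpr hfy) (g y)
  · refine le_iInf fun z => ?_
    refine le_trans (iInf_le _ z) ?_
    refine le_trans (iInf_le _ z) ?_
    have hz : (f z + ⟪gradient f z, z - z⟫ + 1 / ((1 + ν) * γ) * ‖z - z‖ ^ (1 + ν) : ℝ) = f z := by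
      simp [Real.zero_rpow hp0.ne']
    rw [hz]
end

section
/- Let f : ℝ^n → ℝ have ν-Hölder continuous gradient with constant L_ν, ν ∈ (0,1], set p = 1 + ν, let g : ℝ^n → ℝ ∪ {+∞} be proper lsc, and φ := f + g. If x̄ is a p-calm point of φ with constant M > 0, then for every γ ∈ (0, min{1/(2L_ν), 1/(2pM)}], the high-order forward–backward splitting mapping satisfies T_γ(x̄) = {x̄}, i.e., x̄ is the unique minimizer of y ↦ f(x̄) + ⟨∇f(x̄), y − x̄⟩ + g(y) + (1/(pγ))‖x̄ − y‖^p. -/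
open Real
open scoped RealInnerProductSpace

lemma descent {n : ℕ} {ν L : ℝ} (hν : ν ∈ Set.Ioc (0 : ℝ) 1)
    {f : EuclideanSpace ℝ (Fin n) → ℝ} (hf : Differentiable ℝ f)
    (hH : ∀ x y : EuclideanSpace ℝ (Fin n),
      ‖gradient f y - gradient f x‖ ≤ L * ‖y - x‖ ^ ν)
    {p : ℝ} (hp : p = 1 + ν) (x y : EuclideanSpace ℝ (Fin n)) :
    f y ≤ f x + ⟪gradient f x, y - x⟫ + L / p * ‖y - x‖ ^ p := by
  have hν0 := hν.1
  have hp1 : 1 ≤ p := by rw [hp]; linarith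
  have hp0 : 0 < p := by linarith
  have hpν : p - 1 = ν := by rw [hp]; ring
  set v := y - x with hv
  set h : ℝ → ℝ := fun t => f (x + t • v) - t * ⟪gradient f x, v⟫ - L / p * t ^ p * ‖v‖ ^ p
    with hh
  have hline : ∀ t : ℝ, HasDerivAt (fun s : ℝ => f (x + s • v)) ⟪gradient f (x + t • v), v⟫ t := by
    intro t
    have h1 : HasDerivAt (fun s : ℝ => x + s • v) v t := by
      simpa using ((hasDerivAt_id t).smul_const v).const_add x
    simpa [Function.comp_def] using ((hf (x + t • v)).hasGradientAt.hasFDerivAt).comp_hasDerivAt t h1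
  have hderiv : ∀ t : ℝ, HasDerivAt h
      (⟪gradient f (x + t • v) - gradient f x, v⟫ - L * t ^ ν * ‖v‖ ^ p) t := by
    intro t
    have h2 : HasDerivAt (fun s : ℝ => s ^ p) (p * t ^ (p - 1)) t :=
      Real.hasDerivAt_rpow_const (Or.inr hp1)
    have hA : HasDerivAt (fun s : ℝ => s * ⟪gradient f x, v⟫) ⟪gradient f x, v⟫ t := by
      simpa using (hasDerivAt_id t).mul_const (⟪gradient f x, v⟫ : ℝ)
    have hB : HasDerivAt (fun s : ℝ => L / p * s ^ p * ‖v‖ ^ p)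
        (L / p * (p * t ^ (p - 1)) * ‖v‖ ^ p) t := (h2.const_mul (L / p)).mul_const _
    have h3 := ((hline t).sub hA).sub hB
    convert h3 using 1
    · rfl
    · rfl
    · rfl
    rw [inner_sub_left, hpν]
    field_simp
  have hnonpos : ∀ t ∈ Set.Ioo (0:ℝ) 1,
      ⟪gradient f (x + t • v) - gradient f x, v⟫ - L * t ^ ν * ‖v‖ ^ p ≤ 0 := by
    intro t ht
    have ht0 : (0:ℝ) ≤ t := ht.1.le
    have hb1 : ⟪gradient f (x + t • v) - gradient f x, v⟫ ≤
        ‖gradient f (x + t • v) - gradient f x‖ * ‖v‖ := real_inner_le_norm _ _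
    have hb2 : ‖gradient f (x + t • v) - gradient f x‖ ≤ L * ‖t • v‖ ^ ν := by
      simpa using hH x (x + t • v)
    have hb3 : ‖t • v‖ ^ ν = t ^ ν * ‖v‖ ^ ν := by
      rw [norm_smul, Real.norm_eq_abs, abs_of_nonneg ht0,
        Real.mul_rpow ht0 (norm_nonneg v)]
    have hb4 : ‖v‖ ^ ν * ‖v‖ = ‖v‖ ^ p := by
      rw [hp, add_comm, Real.rpow_add' (norm_nonneg v) (by linarith), Real.rpow_one]
    have : ⟪gradient f (x + t • v) - gradient f x, v⟫ ≤ L * t ^ ν * ‖v‖ ^ p := by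
      calc ⟪gradient f (x + t • v) - gradient f x, v⟫
          ≤ L * ‖t • v‖ ^ ν * ‖v‖ := hb1.trans (by
            apply mul_le_mul_of_nonneg_right hb2 (norm_nonneg v))
        _ = L * t ^ ν * (‖v‖ ^ ν * ‖v‖) := by rw [hb3]; ring
        _ = L * t ^ ν * ‖v‖ ^ p := by rw [hb4]
    linarith
  have hanti : AntitoneOn h (Set.Icc 0 1) := by
    apply antitoneOn_of_deriv_nonpos (convex_Icc 0 1)
    · exact fun t _ => ((hderiv t).continuousAt).continuousWithinAt
    · exact fun t _ => (hderiv t).differentiableAt.differentiableWithinAt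
    · intro t ht
      rw [interior_Icc] at ht
      rw [(hderiv t).deriv]
      exact hnonpos t ht
  have h10 : h 1 ≤ h 0 := hanti (by norm_num) (by norm_num) (by norm_num)
  simp only [hh, one_smul, zero_smul, add_zero, Real.one_rpow, zero_mul, mul_zero,
    sub_zero, mul_one] at h10
  have hx1 : x + v = y := by rw [hv]; abel
  rw [hx1, Real.zero_rpow hp0.ne'] at h10
  linarith

/-- At a `p`-calm point `xb` of `φ = f + g`, for small `γ` the HiFBS mapping
satisfies `T_γ(xb) = {xb}`. -/
theorem stmt10 (n : ℕ) (ν L : ℝ) (hν : ν ∈ Set.Ioc (0 : ℝ) 1) (hL : 0 < L)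
    (f : EuclideanSpace ℝ (Fin n) → ℝ) (hf : Differentiable ℝ f)
    (hH : ∀ x y : EuclideanSpace ℝ (Fin n),
      ‖gradient f y - gradient f x‖ ≤ L * ‖y - x‖ ^ ν)
    (g : EuclideanSpace ℝ (Fin n) → EReal)
    (hproper_top : ∃ x, g x ≠ ⊤) (hproper_bot : ∀ x, g x ≠ ⊥)
    (hlsc : LowerSemicontinuous g)
    (p : ℝ) (hp : p = 1 + ν)
    (xb : EuclideanSpace ℝ (Fin n)) (hdom : g xb ≠ ⊤)
    (M : ℝ) (hM : 0 < M)
    (hcalm : ∀ x, x ≠ xb →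
      ((f xb : ℝ) : EReal) + g xb < ((f x : ℝ) : EReal) + g x + ((M * ‖x - xb‖ ^ p : ℝ) : EReal))
    (γ : ℝ) (hγ : γ ∈ Set.Ioc (0 : ℝ) (min (1 / (2 * L)) (1 / (2 * p * M)))) :
    ∀ y : EuclideanSpace ℝ (Fin n), y ≠ xb →
      ((f xb : ℝ) : EReal) + g xb <
        ((f xb + ⟪gradient f xb, y - xb⟫ + 1 / (p * γ) * ‖xb - y‖ ^ p : ℝ) : EReal) + g y := by
  intro y hy
  obtain ⟨a, ha⟩ : ∃ a : ℝ, g xb = (a : EReal) :=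
    ⟨(g xb).toReal, (EReal.coe_toReal hdom (hproper_bot xb)).symm⟩
  have hp0 : 0 < p := by rw [hp]; linarith [hν.1]
  have hγ0 : 0 < γ := hγ.1
  have hγL : γ * (2 * L) ≤ 1 := by
    have := (le_min_iff.mp hγ.2).1
    rwa [le_div_iff₀ (by linarith)] at this
  have hγM : γ * (2 * p * M) ≤ 1 := by
    have := (le_min_iff.mp hγ.2).2
    rwa [le_div_iff₀ (by positivity)] at this
  have hkey : M + L / p ≤ 1 / (p * γ) := by
    rw [le_div_iff₀ (by positivity)]
    have : (M + L / p) * (p * γ) = γ * (p * M) + γ * L := by field_simp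
    rw [this]; nlinarith
  by_cases hyT : g y = ⊤
  · rw [hyT, EReal.add_top_of_ne_bot (EReal.coe_ne_bot _), ha]
    exact EReal.add_lt_top (EReal.coe_ne_top _) (EReal.coe_ne_top _)
  obtain ⟨b, hb⟩ : ∃ b : ℝ, g y = (b : EReal) :=
    ⟨(g y).toReal, (EReal.coe_toReal hyT (hproper_bot y)).symm⟩
  rw [ha, hb]
  have hcal := hcalm y hy
  rw [ha, hb] at hcal
  have hcal' : f xb + a < f y + b + M * ‖y - xb‖ ^ p := by exact_mod_cast hcal
  have hdes := descent hν hf hH hp xb y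
  have hc : (0:ℝ) ≤ ‖y - xb‖ ^ p := Real.rpow_nonneg (norm_nonneg _) p
  have hnorm : ‖xb - y‖ = ‖y - xb‖ := norm_sub_rev _ _
  have hmul : (M + L / p) * ‖y - xb‖ ^ p ≤ 1 / (p * γ) * ‖y - xb‖ ^ p :=
    mul_le_mul_of_nonneg_right hkey hc
  have : f xb + a < f xb + ⟪gradient f xb, y - xb⟫ + 1 / (p * γ) * ‖xb - y‖ ^ p + b := by
    rw [hnorm]; nlinarith
  exact_mod_cast this
end

section
/- Let f : ℝ^n → ℝ have ν-Hölder continuous gradient with constant L_ν, ν ∈ (0,1], p = 1 + ν, g proper lsc, φ := f + g. If x̄ is a p-calm point of φ, then −∇f(x̄) ∈ ∂g(x̄), where ∂g denotes the Mordukhovich (limiting) subdifferential. -/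
open Real Filter
open scoped RealInnerProductSpace Topology

/-- The Fréchet (regular) subdifferential of an extended-real-valued function. -/
def frechetSubdiff {n : ℕ} (g : EuclideanSpace ℝ (Fin n) → EReal)
    (x : EuclideanSpace ℝ (Fin n)) : Set (EuclideanSpace ℝ (Fin n)) :=
  {ζ | ∀ ε : ℝ, 0 < ε → ∀ᶠ x' in 𝓝 x,
    g x + ((⟪ζ, x' - x⟫ - ε * ‖x' - x‖ : ℝ) : EReal) ≤ g x'}

/-- The Mordukhovich (limiting) subdifferential. -/
def limitingSubdiff {n : ℕ} (g : EuclideanSpace ℝ (Fin n) → EReal)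
    (x : EuclideanSpace ℝ (Fin n)) : Set (EuclideanSpace ℝ (Fin n)) :=
  {ζ | ∃ xs ζs : ℕ → EuclideanSpace ℝ (Fin n),
    (∀ k, ζs k ∈ frechetSubdiff g (xs k)) ∧
    Tendsto xs atTop (𝓝 x) ∧
    Tendsto (fun k => g (xs k)) atTop (𝓝 (g x)) ∧
    Tendsto ζs atTop (𝓝 ζ)}

/-- If `xb` is a `p`-calm point of `φ = f + g` with `p = 1 + ν`, then
`-∇f(xb) ∈ ∂g(xb)`. -/
theorem stmt12 (n : ℕ) (ν L : ℝ) (hν : ν ∈ Set.Ioc (0 : ℝ) 1) (hL : 0 < L)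
    (f : EuclideanSpace ℝ (Fin n) → ℝ) (hf : Differentiable ℝ f)
    (hH : ∀ x y : EuclideanSpace ℝ (Fin n),
      ‖gradient f y - gradient f x‖ ≤ L * ‖y - x‖ ^ ν)
    (g : EuclideanSpace ℝ (Fin n) → EReal)
    (hproper_top : ∃ x, g x ≠ ⊤) (hproper_bot : ∀ x, g x ≠ ⊥)
    (hlsc : LowerSemicontinuous g)
    (p : ℝ) (hp : p = 1 + ν)
    (xb : EuclideanSpace ℝ (Fin n)) (hdom : g xb ≠ ⊤)
    (M : ℝ) (hM : 0 < M)
    (hcalm : ∀ x, x ≠ xb →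
      ((f xb : ℝ) : EReal) + g xb < ((f x : ℝ) : EReal) + g x + ((M * ‖x - xb‖ ^ p : ℝ) : EReal)) :
    -gradient f xb ∈ limitingSubdiff g xb := by

  subst hp
  obtain ⟨hν0, hν1⟩ := hν
  set ζ := -gradient f xb with hζ
  have hfs : ζ ∈ frechetSubdiff g xb := by
    intro ε hε
    have hgrad : HasGradientAt f (gradient f xb) xb := (hf xb).hasGradientAt
    have hlo := hasGradientAt_iff_isLittleO.mp hgrad
    have h1 := hlo.def (half_pos hε)
    have hM2 : 0 < ε / (2 * M) := by positivity
    have h0 : Tendsto (fun x' : EuclideanSpace ℝ (Fin n) => ‖x' - xb‖) (𝓝 xb) (𝓝 0) := by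
      have hc : Continuous (fun x' : EuclideanSpace ℝ (Fin n) => ‖x' - xb‖) :=
        (continuous_id.sub (continuous_const : Continuous fun _ : EuclideanSpace ℝ (Fin n) => xb)).norm
      simpa using hc.tendsto xb
    have htend : Tendsto (fun x' : EuclideanSpace ℝ (Fin n) => ‖x' - xb‖ ^ ν) (𝓝 xb) (𝓝 0) := by
      have hc : ContinuousAt (fun t : ℝ => t ^ ν) 0 :=
        Real.continuousAt_rpow_const 0 ν (Or.inr hν0.le)
      have := hc.tendsto.comp h0
      simpa [Function.comp_def, Real.zero_rpow hν0.ne'] using this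
    have h2 : ∀ᶠ x' in 𝓝 xb, ‖x' - xb‖ ^ ν < ε / (2 * M) :=
      htend.eventually_lt_const hM2
    filter_upwards [h1, h2] with x' h1 h2
    by_cases hx : x' = xb
    · subst hx; simp
    · have hdpos : 0 < ‖x' - xb‖ := norm_pos_iff.mpr (sub_ne_zero.mpr hx)
      rcases eq_or_ne (g x') ⊤ with htop | htop
      · simp [htop]
      · have hgx' := EReal.coe_toReal htop (hproper_bot x')
        have hgxb := EReal.coe_toReal hdom (hproper_bot xb)
        set r := (g xb).toReal
        set r' := (g x').toReal
        have hcalm' := hcalm x' hx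
        rw [← hgx', ← hgxb] at hcalm' ⊢
        rw [← EReal.coe_add, ← EReal.coe_add, ← EReal.coe_add, EReal.coe_lt_coe_iff] at hcalm'
        rw [← EReal.coe_add, EReal.coe_le_coe_iff]
        have hrp : ‖x' - xb‖ ^ (1 + ν) = ‖x' - xb‖ * ‖x' - xb‖ ^ ν := by
          rw [Real.rpow_add hdpos, Real.rpow_one]
        have habs : |f x' - f xb - ⟪gradient f xb, x' - xb⟫| ≤ ε / 2 * ‖x' - xb‖ := by
          simpa using h1
        have hmul : M * ‖x' - xb‖ ^ (1 + ν) ≤ ε / 2 * ‖x' - xb‖ := by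
          rw [hrp, ← mul_assoc]
          calc M * ‖x' - xb‖ * ‖x' - xb‖ ^ ν ≤ M * ‖x' - xb‖ * (ε / (2 * M)) := by
                exact mul_le_mul_of_nonneg_left h2.le (by positivity)
            _ = ε / 2 * ‖x' - xb‖ := by field_simp
        have hin : ⟪ζ, x' - xb⟫ = -⟪gradient f xb, x' - xb⟫ := by
          simp [hζ, inner_neg_left]
        rw [hin]
        have habs' := abs_le.mp habs
        linarith [habs'.1, habs'.2]
  exact ⟨fun _ => xb, fun _ => ζ, fun _ => hfs, tendsto_const_nhds, tendsto_const_nhds,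
    tendsto_const_nhds⟩
end

section
/- Let f : ℝ^n → ℝ have ν-Hölder continuous gradient with constant L_ν, ν ∈ (0,1], p = 1 + ν, let g : ℝ^n → ℝ ∪ {+∞} be proper lsc and high-order prox-bounded with threshold γ^{g,p} > 0, and φ := f + g. Then there exists γ̄ ∈ (0, γ^{g,p}) such that for every γ ∈ (0, γ̄) and every r > 0, there exists a finite τ > 0 with the property that every minimizer y of z ↦ f(x) + ⟨∇f(x), z − x⟩ + g(z) + (1/(pγ))‖x − z‖^p satisfies ‖y‖ ≤ τ, uniformly for all x in the open ball B(0;r). -/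
open Real Metric
open scoped RealInnerProductSpace

set_option maxHeartbeats 1000000 in
/-- Boundedness of HiFBS: there is `γ̄ ∈ (0, γth)` such that for each `γ ∈ (0, γ̄)`
and each `r > 0`, all minimizers defining `T_γ(x)` with `x ∈ B(0;r)` lie in a ball
of some finite radius `τ`. -/
theorem stmt13 (n : ℕ) (ν L : ℝ) (hν : ν ∈ Set.Ioc (0 : ℝ) 1) (hL : 0 < L)
    (f : EuclideanSpace ℝ (Fin n) → ℝ) (hf : Differentiable ℝ f)
    (hH : ∀ x y : EuclideanSpace ℝ (Fin n),
      ‖gradient f y - gradient f x‖ ≤ L * ‖y - x‖ ^ ν)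
    (g : EuclideanSpace ℝ (Fin n) → EReal)
    (hproper_top : ∃ x, g x ≠ ⊤) (hproper_bot : ∀ x, g x ≠ ⊥)
    (hlsc : LowerSemicontinuous g)
    (p : ℝ) (hp : p = 1 + ν)
    (γth : ℝ) (hγth : 0 < γth)
    (hpb : ∀ γ ∈ Set.Ioo (0 : ℝ) γth, ∃ x : EuclideanSpace ℝ (Fin n),
      ⊥ < ⨅ y : EuclideanSpace ℝ (Fin n),
            g y + ((1 / (p * γ) * ‖x - y‖ ^ p : ℝ) : EReal)) :
    ∃ γ' ∈ Set.Ioo (0 : ℝ) γth, ∀ γ ∈ Set.Ioo (0 : ℝ) γ', ∀ r : ℝ, 0 < r →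
      ∃ τ : ℝ, 0 < τ ∧ ∀ x ∈ ball (0 : EuclideanSpace ℝ (Fin n)) r,
        ∀ y : EuclideanSpace ℝ (Fin n),
          (∀ z : EuclideanSpace ℝ (Fin n),
            ((f x + ⟪gradient f x, y - x⟫ + 1 / (p * γ) * ‖x - y‖ ^ p : ℝ) : EReal) + g y ≤
            ((f x + ⟪gradient f x, z - x⟫ + 1 / (p * γ) * ‖x - z‖ ^ p : ℝ) : EReal) + g z) →
          ‖y‖ ≤ τ := by
  obtain ⟨hν0, hν1⟩ := hν
  have hp0 : 0 < p := by rw [hp]; linarith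
  set γ₁ : ℝ := 3 * γth / 4 with hγ₁def
  have hγ₁mem : γ₁ ∈ Set.Ioo (0:ℝ) γth := ⟨by linarith, by linarith⟩
  obtain ⟨x₁, hx₁⟩ := hpb γ₁ hγ₁mem
  obtain ⟨me, hme_bot, hme_lt⟩ := exists_between hx₁
  have hme_top : me ≠ ⊤ := (lt_of_lt_of_le hme_lt le_top).ne
  set m : ℝ := me.toReal with hmdef
  have hmcoe : (m : EReal) = me := EReal.coe_toReal hme_top (ne_of_gt hme_bot)
  set c₁ : ℝ := 1 / (p * γ₁) with hc₁def
  have hc₁ : 0 < c₁ := by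
    apply one_div_pos.mpr; positivity
  have hm : ∀ y, (m : EReal) ≤ g y + ((c₁ * ‖x₁ - y‖ ^ p : ℝ) : EReal) := by
    intro y
    rw [hmcoe]
    exact le_of_lt (lt_of_lt_of_le hme_lt (iInf_le _ y))
  obtain ⟨z₀, hz₀⟩ := hproper_top
  set b : ℝ := (g z₀).toReal with hbdef
  have hgz₀ : g z₀ = (b : EReal) := (EReal.coe_toReal hz₀ (hproper_bot z₀)).symm
  refine ⟨γth / 2, ⟨by linarith, by linarith⟩, ?_⟩
  intro γ hγ r hr
  obtain ⟨hγ0, hγlt⟩ := hγ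
  set c : ℝ := 1 / (p * γ) with hcdef
  have hc : 0 < c := by apply one_div_pos.mpr; positivity
  have hcc : c₁ < c := by
    rw [hcdef, hc₁def]
    apply one_div_lt_one_div_of_lt (by positivity)
    have : γ < γ₁ := by rw [hγ₁def]; linarith
    nlinarith
  set δ : ℝ := (c - c₁) / 2 with hδdef
  have hδ : 0 < δ := by rw [hδdef]; linarith
  set M : ℝ := ‖gradient f 0‖ + L * r ^ ν with hMdef
  have hM : 0 ≤ M := by
    have : 0 ≤ L * r ^ ν := by positivity
    have := norm_nonneg (gradient f 0); linarith
  set s : ℝ := ‖x₁‖ with hsdef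
  have hs : 0 ≤ s := norm_nonneg _
  set X : ℝ := (c + c₁) / (2 * c₁) with hXdef
  have hX1 : 1 < X := by
    rw [hXdef, lt_div_iff₀ (by linarith)]; linarith
  set θ : ℝ := X ^ (1 / p) with hθdef
  have hθ1 : 1 < θ := by
    rw [hθdef]
    rw [Real.one_lt_rpow_iff_of_pos (by linarith)]
    left; exact ⟨hX1, by positivity⟩
  have hθp : θ ^ p = X := by
    rw [hθdef, one_div, Real.rpow_inv_rpow (by linarith : (0:ℝ) ≤ X) hp0.ne']
  set K : ℝ := M * ‖z₀‖ + 2 * M * r + c * (r + ‖z₀‖) ^ p + b - m with hKdef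
  set B : ℝ := (M + M * r + |K|) / δ + 1 with hBdef
  have hB0 : 0 < B := by
    rw [hBdef]
    have h1 : 0 ≤ (M + M * r + |K|) / δ := by positivity
    linarith
  have hBν' : 0 ≤ B ^ (1/ν) := Real.rpow_nonneg hB0.le _
  have hsr' : 0 ≤ (s + r) / (θ - 1) := div_nonneg (by linarith) (by linarith)
  refine ⟨r + 1 + B ^ (1/ν) + (s + r) / (θ - 1), by linarith, ?_⟩
  intro x hx y hmin
  by_contra hcon
  push_neg at hcon
  set t : ℝ := ‖y‖ with htdef
  set u : ℝ := t - r with hudef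
  have hxr : ‖x‖ < r := by rwa [mem_ball_zero_iff] at hx
  have hBν : 0 ≤ B ^ (1/ν) := Real.rpow_nonneg hB0.le _
  have hsr : 0 ≤ (s + r) / (θ - 1) := hsr'
  have hu1 : 1 ≤ u := by
    rw [hudef]; linarith
  have hu0 : 0 < u := by linarith
  have huB : B ^ (1/ν) ≤ u := by rw [hudef]; linarith
  have huθ : (s + r) / (θ - 1) ≤ u := by rw [hudef]; linarith
  -- gradient bound
  have hgrad : ‖gradient f x‖ ≤ M := by
    have h1 := hH 0 x
    rw [sub_zero] at h1
    have h2 : ‖gradient f x‖ ≤ ‖gradient f 0‖ + ‖gradient f x - gradient f 0‖ := by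
      have := norm_sub_norm_le (gradient f x) (gradient f 0)
      linarith
    have h3 : ‖x‖ ^ ν ≤ r ^ ν := Real.rpow_le_rpow (norm_nonneg _) hxr.le hν0.le
    have h4 : L * ‖x‖ ^ ν ≤ L * r ^ ν := mul_le_mul_of_nonneg_left h3 hL.le
    rw [hMdef]
    linarith
  -- extract real inequality from the minimizer hypothesis at z₀
  have hgy_top : g y ≠ ⊤ := by
    intro htop
    have h := hmin z₀
    rw [htop, hgz₀, ← EReal.coe_add] at h
    rw [EReal.coe_add_top, top_le_iff] at h
    exact (EReal.coe_ne_top _) h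
  set a : ℝ := (g y).toReal with hadef
  have hgy : g y = (a : EReal) := (EReal.coe_toReal hgy_top (hproper_bot y)).symm
  have key1 : f x + ⟪gradient f x, y - x⟫ + c * ‖x - y‖ ^ p + a ≤
      f x + ⟪gradient f x, z₀ - x⟫ + c * ‖x - z₀‖ ^ p + b := by
    have h := hmin z₀
    rw [hgy, hgz₀, ← EReal.coe_add, ← EReal.coe_add, EReal.coe_le_coe_iff] at h
    rw [hcdef]
    exact h
  have key2 : m ≤ a + c₁ * ‖x₁ - y‖ ^ p := by
    have h := hm y
    rw [hgy, ← EReal.coe_add, EReal.coe_le_coe_iff] at h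
    exact h
  -- bounds on the pieces
  have hip1 : ⟪gradient f x, z₀ - x⟫ ≤ M * (‖z₀‖ + r) := by
    have h1 := real_inner_le_norm (gradient f x) (z₀ - x)
    have h2 : ‖z₀ - x‖ ≤ ‖z₀‖ + r := by
      have := norm_sub_le z₀ x; linarith
    have h3 : ‖gradient f x‖ * ‖z₀ - x‖ ≤ M * (‖z₀‖ + r) :=
      mul_le_mul hgrad h2 (norm_nonneg _) hM
    linarith
  have hip2 : -⟪gradient f x, y - x⟫ ≤ M * (t + r) := by
    have h1 := real_inner_le_norm (gradient f x) (x - y)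
    have h2 : ‖x - y‖ ≤ t + r := by
      have := norm_sub_le x y; rw [htdef]; linarith
    have h3 : ⟪gradient f x, x - y⟫ = -⟪gradient f x, y - x⟫ := by
      rw [show x - y = -(y - x) by abel, inner_neg_right]
    have h4 : ‖gradient f x‖ * ‖x - y‖ ≤ M * (t + r) :=
      mul_le_mul hgrad h2 (norm_nonneg _) hM
    linarith
  have hip3 : c * ‖x - z₀‖ ^ p ≤ c * (r + ‖z₀‖) ^ p := by
    have h2 : ‖x - z₀‖ ≤ r + ‖z₀‖ := by
      have := norm_sub_le x z₀; linarith
    exact mul_le_mul_of_nonneg_left (Real.rpow_le_rpow (norm_nonneg _) h2 hp0.le) hc.le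
  have hip4 : c₁ * ‖x₁ - y‖ ^ p ≤ ((c + c₁) / 2) * u ^ p := by
    have h2 : ‖x₁ - y‖ ≤ θ * u := by
      have h3 := norm_sub_le x₁ y
      have h4 : s + r ≤ u * (θ - 1) := by
        rw [div_le_iff₀ (by linarith)] at huθ; linarith
      have h5 : u * (θ - 1) = θ * u - u := by ring
      have h6 : s + t ≤ θ * u := by linarith
      linarith
    have h5 : ‖x₁ - y‖ ^ p ≤ (θ * u) ^ p :=
      Real.rpow_le_rpow (norm_nonneg _) h2 hp0.le
    have h6 : (θ * u) ^ p = θ ^ p * u ^ p := Real.mul_rpow (by linarith) hu0.le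
    rw [h6, hθp] at h5
    have h7 : c₁ * X = (c + c₁) / 2 := by
      rw [hXdef]; field_simp
    calc c₁ * ‖x₁ - y‖ ^ p ≤ c₁ * (X * u ^ p) := mul_le_mul_of_nonneg_left h5 hc₁.le
      _ = ((c + c₁) / 2) * u ^ p := by rw [← mul_assoc, h7]
  have hip5 : c * u ^ p ≤ c * ‖x - y‖ ^ p := by
    have h2 : u ≤ ‖x - y‖ := by
      have := norm_sub_norm_le y x
      have h3 : ‖x - y‖ = ‖y - x‖ := by rw [norm_sub_rev]
      rw [hudef, htdef]; linarith
    exact mul_le_mul_of_nonneg_left (Real.rpow_le_rpow hu0.le h2 hp0.le) hc.le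
  -- the coercivity contradiction
  have hmain : δ * u ^ p ≤ M * u + M * r + K := by
    have e1 : M * t = M * u + M * r := by rw [hudef]; ring
    have e2 : δ * u ^ p = c * u ^ p - ((c + c₁) / 2) * u ^ p := by rw [hδdef]; ring
    rw [hKdef]
    linarith [key1, key2, hip1, hip2, hip3, hip4, hip5]
  have hup : u ^ p = u * u ^ ν := by
    rw [hp, Real.rpow_add hu0, Real.rpow_one]
  have huν : B ≤ u ^ ν := by
    have h1 : (B ^ (1/ν)) ^ ν = B := by
      rw [one_div, Real.rpow_inv_rpow hB0.le hν0.ne']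
    calc B = (B ^ (1/ν)) ^ ν := h1.symm
      _ ≤ u ^ ν := Real.rpow_le_rpow hBν huB hν0.le
  have hδB : δ * B = M + M * r + |K| + δ := by
    rw [hBdef, mul_add, mul_one, mul_div_cancel₀ _ hδ.ne']
  have habs : K ≤ |K| := le_abs_self K
  have h1 : δ * B ≤ δ * u ^ ν := mul_le_mul_of_nonneg_left huν hδ.le
  have h2 : δ * B * u ≤ δ * u ^ ν * u := mul_le_mul_of_nonneg_right h1 hu0.le
  have e2 : δ * B * u = (M + M * r + |K| + δ) * u := by rw [hδB]
  have h3 : M * r ≤ M * r * u := le_mul_of_one_le_right (mul_nonneg hM hr.le) hu1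
  have h4 : |K| ≤ |K| * u := le_mul_of_one_le_right (abs_nonneg K) hu1
  have h5 : δ ≤ δ * u := le_mul_of_one_le_right hδ.le hu1
  have hupδ : δ * u ^ p = δ * u ^ ν * u := by rw [hup]; ring
  have e3 : (M + M * r + |K| + δ) * u = M * u + M * r * u + |K| * u + δ * u := by ring
  linarith [hmain, hupδ, h2, e2, e3, h3, h4, h5, habs, hδ]
end

section
/- Let p > 1, let g : ℝ^n → ℝ ∪ {+∞} be proper lsc and high-order prox-bounded with threshold γ^{g,p} > 0, and let f : ℝ^n → ℝ be twice continuously differentiable on an open neighborhood of a point x̄ ∈ dom(f+g). Let γ ∈ (0, γ^{g,p}) and let ȳ be a minimizer of y ↦ f(x̄) + ⟨∇f(x̄), y − x̄⟩ + g(y) + (1/(pγ))‖x̄ − y‖^p. Then every element η of the Fréchet (regular) subdifferential of the high-order forward–backward envelope F_γ at x̄ satisfies η = ∇²f(x̄)(ȳ − x̄) + (1/γ)‖x̄ − ȳ‖^{p-2}(x̄ − ȳ), and moreover η − ∇²f(x̄)(ȳ − x̄) ∈ ∇f(x̄) + ∂g(ȳ). -/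
open Real Filter Metric
open scoped RealInnerProductSpace Topology

section Aux

lemma mem_frechetSubdiff_of_min {n : ℕ} (u : EuclideanSpace ℝ (Fin n) → EReal)
    (hbot : ∀ z, u z ≠ ⊥)
    (y0 : EuclideanSpace ℝ (Fin n)) (r : ℝ) (hr : u y0 = (r : EReal))
    (φ : EuclideanSpace ℝ (Fin n) → ℝ) (w : EuclideanSpace ℝ (Fin n))
    (hφ : HasFDerivAt φ (innerSL ℝ w) y0)
    (hmin : ∀ z, ((φ y0 : ℝ) : EReal) + u y0 ≤ ((φ z : ℝ) : EReal) + u z) :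
    -w ∈ frechetSubdiff u y0 := by
  intro ε hε
  have hlo : (fun z => φ z - φ y0 - ⟪w, z - y0⟫) =o[𝓝 y0] fun z => z - y0 := by
    have := hφ.isLittleO
    simpa using this
  have hev := (Asymptotics.isLittleO_iff.1 hlo) hε
  filter_upwards [hev] with z hz
  rcases eq_or_ne (u z) ⊤ with htop | htop
  · rw [htop]; exact le_top
  obtain ⟨s, hs⟩ : ∃ s : ℝ, u z = (s : EReal) := ⟨(u z).toReal, (EReal.coe_toReal htop (hbot z)).symm⟩
  rw [hr, hs, ← EReal.coe_add]
  apply EReal.coe_le_coe_iff.2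
  have hmz : φ y0 + r ≤ φ z + s := by
    have := hmin z
    rw [hr, hs, ← EReal.coe_add, ← EReal.coe_add] at this
    exact EReal.coe_le_coe_iff.1 this
  have habs : |φ z - φ y0 - ⟪w, z - y0⟫| ≤ ε * ‖z - y0‖ := by
    simpa [Real.norm_eq_abs] using hz
  rw [abs_le] at habs
  have h1 : ⟪-w, z - y0⟫ = -⟪w, z - y0⟫ := inner_neg_left w (z - y0)
  linarith [habs.1, habs.2]

lemma eq_grad_of_frechet_ineq {n : ℕ} (h : EuclideanSpace ℝ (Fin n) → ℝ)
    (x0 : EuclideanSpace ℝ (Fin n)) (w η : EuclideanSpace ℝ (Fin n))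
    (hh : HasFDerivAt h (innerSL ℝ w) x0)
    (hη : ∀ ε : ℝ, 0 < ε → ∀ᶠ z in 𝓝 x0, h x0 + (⟪η, z - x0⟫ - ε * ‖z - x0‖) ≤ h z) :
    η = w := by
  have key : ∀ v : EuclideanSpace ℝ (Fin n), ∀ ε : ℝ, 0 < ε → ⟪η - w, v⟫ ≤ 2 * ε * ‖v‖ := by
    intro v ε hε
    have hlo : (fun z => h z - h x0 - ⟪w, z - x0⟫) =o[𝓝 x0] fun z => z - x0 := by
      simpa using hh.isLittleO
    have hev := (Asymptotics.isLittleO_iff.1 hlo) hε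
    have hS : ∀ᶠ z in 𝓝 x0,
        (h x0 + (⟪η, z - x0⟫ - ε * ‖z - x0‖) ≤ h z) ∧
        ‖h z - h x0 - ⟪w, z - x0⟫‖ ≤ ε * ‖z - x0‖ := (hη ε hε).and hev
    have htend : Tendsto (fun t : ℝ => x0 + t • v) (𝓝[>] 0) (𝓝 x0) := by
      have hc : Tendsto (fun t : ℝ => x0 + t • v) (𝓝 0) (𝓝 x0) := by
        have : Continuous (fun t : ℝ => x0 + t • v) := by continuity
        simpa using this.tendsto 0
      exact hc.mono_left nhdsWithin_le_nhds
    have := (htend.eventually hS).and (eventually_mem_nhdsWithin (s := Set.Ioi (0:ℝ)) (a := 0))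
    obtain ⟨t, ⟨⟨H1, H2⟩, ht⟩⟩ := this.exists
    have ht0 : 0 < t := ht
    have hzx : x0 + t • v - x0 = t • v := by abel
    rw [hzx] at H1 H2
    have hnorm : ‖t • v‖ = t * ‖v‖ := by
      rw [norm_smul, Real.norm_eq_abs, abs_of_pos ht0]
    have hieta : ⟪η, t • v⟫ = t * ⟪η, v⟫ := real_inner_smul_right η v t
    have hiw : ⟪w, t • v⟫ = t * ⟪w, v⟫ := real_inner_smul_right w v t
    have habs : |h (x0 + t • v) - h x0 - ⟪w, t • v⟫| ≤ ε * (t * ‖v‖) := by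
      simpa [Real.norm_eq_abs, hnorm] using H2
    rw [abs_le] at habs
    have hcomb : t * ⟪η, v⟫ ≤ t * ⟪w, v⟫ + 2 * ε * (t * ‖v‖) := by
      rw [hieta, hnorm] at H1
      rw [hiw] at habs
      linarith [habs.2, H1]
    have hmul : t * ⟪η - w, v⟫ ≤ t * (2 * ε * ‖v‖) := by
      rw [inner_sub_left]
      ring_nf
      ring_nf at hcomb
      linarith
    exact le_of_mul_le_mul_left hmul ht0
  have key2 : ∀ v : EuclideanSpace ℝ (Fin n), ⟪η - w, v⟫ ≤ 0 := by
    intro v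
    by_contra hcon
    push_neg at hcon
    rcases eq_or_lt_of_le (norm_nonneg v) with hv | hv
    · have h1 := key v 1 one_pos
      rw [← hv] at h1
      simp only [mul_zero] at h1
      linarith
    · have := key v (⟪η - w, v⟫ / (4 * ‖v‖)) (by positivity)
      have h4 : 2 * (⟪η - w, v⟫ / (4 * ‖v‖)) * ‖v‖ = ⟪η - w, v⟫ / 2 := by
        field_simp
        ring
      rw [h4] at this
      linarith
  have hzero : ⟪η - w, η - w⟫ = 0 :=
    le_antisymm (key2 (η - w)) real_inner_self_nonneg
  exact sub_eq_zero.1 (inner_self_eq_zero.1 hzero)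

end Aux

/-- Fréchet subdifferential of HiFBE: every regular subgradient `η` of `F_γ` at `xb`
equals `∇²f(xb)(yb − xb) + (1/γ)‖xb − yb‖^{p-2}(xb − yb)` and satisfies
`η − ∇²f(xb)(yb − xb) ∈ ∇f(xb) + ∂g(yb)`. -/
theorem stmt16 (n : ℕ) (p : ℝ) (hp : 1 < p)
    (f : EuclideanSpace ℝ (Fin n) → ℝ) (hf : Differentiable ℝ f)
    (g : EuclideanSpace ℝ (Fin n) → EReal)
    (hproper_top : ∃ x, g x ≠ ⊤) (hproper_bot : ∀ x, g x ≠ ⊥)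
    (hlsc : LowerSemicontinuous g)
    (γth : ℝ) (hγth : 0 < γth)
    (hpb : ∀ γ ∈ Set.Ioo (0 : ℝ) γth, ∃ x : EuclideanSpace ℝ (Fin n),
      ⊥ < ⨅ y : EuclideanSpace ℝ (Fin n),
            g y + ((1 / (p * γ) * ‖x - y‖ ^ p : ℝ) : EReal))
    (xb : EuclideanSpace ℝ (Fin n)) (hdom : g xb ≠ ⊤)
    (U : Set (EuclideanSpace ℝ (Fin n))) (hU : IsOpen U) (hxbU : xb ∈ U)
    (hC2 : ContDiffOn ℝ 2 f U)
    (γ : ℝ) (hγ : γ ∈ Set.Ioo (0 : ℝ) γth)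
    (yb : EuclideanSpace ℝ (Fin n))
    (hyb : ∀ z : EuclideanSpace ℝ (Fin n),
      ((f xb + ⟪gradient f xb, yb - xb⟫ + 1 / (p * γ) * ‖xb - yb‖ ^ p : ℝ) : EReal) + g yb ≤
      ((f xb + ⟪gradient f xb, z - xb⟫ + 1 / (p * γ) * ‖xb - z‖ ^ p : ℝ) : EReal) + g z) :
    ∀ η ∈ frechetSubdiff
        (fun x => ⨅ y : EuclideanSpace ℝ (Fin n),
          ((f x + ⟪gradient f x, y - x⟫ + 1 / (p * γ) * ‖x - y‖ ^ p : ℝ) : EReal) + g y) xb,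
      η = fderiv ℝ (gradient f) xb (yb - xb)
            + (1 / γ * ‖xb - yb‖ ^ (p - 2)) • (xb - yb) ∧
      ∃ ζ ∈ limitingSubdiff g yb,
        η - fderiv ℝ (gradient f) xb (yb - xb) = gradient f xb + ζ := by
  intro η hη
  obtain ⟨hγ0, hγlt⟩ := hγ
  have hp0 : p ≠ 0 := by positivity
  have hγne : γ ≠ 0 := ne_of_gt hγ0
  set c : ℝ := 1 / (p * γ) with hc
  set s : ℝ := 1 / γ * ‖xb - yb‖ ^ (p - 2) with hs
  set w0 := gradient f xb with hw0
  -- g yb is finite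
  have hxbreal : g xb = ((g xb).toReal : EReal) := (EReal.coe_toReal hdom (hproper_bot xb)).symm
  have hgybtop : g yb ≠ ⊤ := by
    intro htop
    have h := hyb xb
    rw [htop, hxbreal, ← EReal.coe_add, EReal.add_top_of_ne_bot (EReal.coe_ne_bot _)] at h
    exact absurd h (not_le.2 (EReal.coe_lt_top _))
  set r : ℝ := (g yb).toReal with hrdef
  have hgyb : g yb = (r : EReal) := (EReal.coe_toReal hgybtop (hproper_bot yb)).symm
  -- Part A : the Fréchet subgradient of g at yb coming from the minimization
  have hζ0 : s • (xb - yb) - w0 ∈ frechetSubdiff g yb := by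
    have h_lin : HasFDerivAt (fun z : EuclideanSpace ℝ (Fin n) => ⟪w0, z - xb⟫)
        (innerSL ℝ w0) yb := by
      have heq : (fun z : EuclideanSpace ℝ (Fin n) => ⟪w0, z - xb⟫)
          = fun z => (innerSL ℝ w0) z - ⟪w0, xb⟫ := by
        funext z; simp [inner_sub_right]
      rw [heq]
      exact ((innerSL ℝ w0).hasFDerivAt).sub_const _
    have h_in : HasFDerivAt (fun z : EuclideanSpace ℝ (Fin n) => xb - z)
        ((0 : EuclideanSpace ℝ (Fin n) →L[ℝ] EuclideanSpace ℝ (Fin n))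
          - ContinuousLinearMap.id ℝ _) yb :=
      (hasFDerivAt_const xb yb).sub (hasFDerivAt_id yb)
    have h_norm : HasFDerivAt (fun z : EuclideanSpace ℝ (Fin n) => ‖xb - z‖ ^ p)
        (((p * ‖xb - yb‖ ^ (p - 2)) • innerSL ℝ (xb - yb)).comp
          ((0 : EuclideanSpace ℝ (Fin n) →L[ℝ] EuclideanSpace ℝ (Fin n))
            - ContinuousLinearMap.id ℝ _)) yb := by
      have := (hasFDerivAt_norm_rpow (xb - yb) hp).comp yb h_in
      exact this
    have hφ : HasFDerivAt
        (fun z : EuclideanSpace ℝ (Fin n) => f xb + ⟪w0, z - xb⟫ + c * ‖xb - z‖ ^ p)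
        (innerSL ℝ (w0 - s • (xb - yb))) yb := by
      have h := ((h_lin.const_add (f xb)).add (h_norm.const_mul c))
      refine h.congr_fderiv ?_
      ext v
      simp only [ContinuousLinearMap.add_apply, ContinuousLinearMap.coe_smul', Pi.smul_apply,
        ContinuousLinearMap.coe_comp', Function.comp_apply, ContinuousLinearMap.sub_apply,
        ContinuousLinearMap.zero_apply, ContinuousLinearMap.coe_id', id_eq, innerSL_apply_apply,
        smul_eq_mul, inner_sub_left, real_inner_smul_left, inner_zero_left]
      simp only [zero_sub, inner_neg_right]
      field_simp
      ring_nf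
      rw [show c * p = 1 / γ by rw [hc]; field_simp, show (-2 + p) = p - 2 by ring, hs]
      ring
    have hmin : ∀ z, ((f xb + ⟪w0, yb - xb⟫ + c * ‖xb - yb‖ ^ p : ℝ) : EReal) + g yb ≤
        ((f xb + ⟪w0, z - xb⟫ + c * ‖xb - z‖ ^ p : ℝ) : EReal) + g z := fun z => hyb z
    have := mem_frechetSubdiff_of_min g hproper_bot yb r hgyb
      (fun z => f xb + ⟪w0, z - xb⟫ + c * ‖xb - z‖ ^ p) (w0 - s • (xb - yb)) hφ hmin
    simpa [neg_sub] using this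
  -- Part B : η is the gradient of the smooth majorant h
  set h : EuclideanSpace ℝ (Fin n) → ℝ :=
    fun z => f z + ⟪gradient f z, yb - z⟫ + c * ‖z - yb‖ ^ p + r with hhdef
  have hFle : ∀ z, (⨅ y : EuclideanSpace ℝ (Fin n),
      ((f z + ⟪gradient f z, y - z⟫ + c * ‖z - y‖ ^ p : ℝ) : EReal) + g y)
      ≤ ((h z : ℝ) : EReal) := by
    intro z
    have h1 : (⨅ y : EuclideanSpace ℝ (Fin n),
        ((f z + ⟪gradient f z, y - z⟫ + c * ‖z - y‖ ^ p : ℝ) : EReal) + g y)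
        ≤ ((f z + ⟪gradient f z, yb - z⟫ + c * ‖z - yb‖ ^ p : ℝ) : EReal) + g yb :=
      iInf_le _ yb
    rw [hgyb, ← EReal.coe_add] at h1
    exact h1
  have hFxb : (⨅ y : EuclideanSpace ℝ (Fin n),
      ((f xb + ⟪gradient f xb, y - xb⟫ + c * ‖xb - y‖ ^ p : ℝ) : EReal) + g y)
      = ((h xb : ℝ) : EReal) := by
    refine le_antisymm (hFle xb) (le_iInf fun z => ?_)
    have h2 := hyb z
    have h3 : ((h xb : ℝ) : EReal)
        = ((f xb + ⟪gradient f xb, yb - xb⟫ + c * ‖xb - yb‖ ^ p : ℝ) : EReal) + g yb := by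
      rw [hgyb, ← EReal.coe_add, hhdef]
    rw [h3]
    exact h2
  have hreal : ∀ ε : ℝ, 0 < ε → ∀ᶠ z in 𝓝 xb,
      h xb + (⟪η, z - xb⟫ - ε * ‖z - xb‖) ≤ h z := by
    intro ε hε
    have h4 := hη ε hε
    filter_upwards [h4] with z hz
    have h5 := le_trans hz (hFle z)
    rw [hFxb, ← EReal.coe_add] at h5
    exact EReal.coe_le_coe_iff.1 h5
  -- differentiability of the gradient at xb and symmetry of the Hessian
  have hC2at : ContDiffAt ℝ 2 f xb := hC2.contDiffAt (hU.mem_nhds hxbU)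
  have hfd1 : ContDiffAt ℝ 1 (fderiv ℝ f) xb := hC2at.fderiv_right (by norm_num)
  have hdf : DifferentiableAt ℝ (fderiv ℝ f) xb := hfd1.differentiableAt one_ne_zero
  set LIEclm := ((InnerProductSpace.toDual ℝ
      (EuclideanSpace ℝ (Fin n))).symm.toContinuousLinearEquiv :
      StrongDual ℝ (EuclideanSpace ℝ (Fin n)) ≃L[ℝ]
        EuclideanSpace ℝ (Fin n)).toContinuousLinearMap with hLIEclm
  have hcomp : HasFDerivAt (gradient f) (LIEclm.comp (fderiv ℝ (fderiv ℝ f) xb)) xb := by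
    have h2 := (LIEclm.hasFDerivAt (x := fderiv ℝ f xb)).comp xb hdf.hasFDerivAt
    exact h2.congr_of_eventuallyEq (Eventually.of_forall fun y => rfl)
  have hHeq : fderiv ℝ (gradient f) xb = LIEclm.comp (fderiv ℝ (fderiv ℝ f) xb) := hcomp.fderiv
  have hG : HasFDerivAt (gradient f) (fderiv ℝ (gradient f) xb) xb := hHeq ▸ hcomp
  have hf''sym : ∀ v u : EuclideanSpace ℝ (Fin n),
      fderiv ℝ (fderiv ℝ f) xb v u = fderiv ℝ (fderiv ℝ f) xb u v :=
    second_derivative_symmetric (fun y => (hf y).hasFDerivAt) hdf.hasFDerivAt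
  have hsym : ∀ v u : EuclideanSpace ℝ (Fin n),
      ⟪fderiv ℝ (gradient f) xb v, u⟫ = ⟪fderiv ℝ (gradient f) xb u, v⟫ := by
    intro v u
    rw [hHeq]
    simp only [ContinuousLinearMap.coe_comp', Function.comp_apply, hLIEclm,
      ContinuousLinearEquiv.coe_coe, LinearIsometryEquiv.coe_toContinuousLinearEquiv]
    rw [InnerProductSpace.toDual_symm_apply, InnerProductSpace.toDual_symm_apply]
    exact hf''sym v u
  have hfderiv_inner : ∀ v : EuclideanSpace ℝ (Fin n), fderiv ℝ f xb v = ⟪w0, v⟫ := by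
    intro v
    rw [hw0, gradient]
    exact (InnerProductSpace.toDual_symm_apply).symm
  -- derivative of the majorant h at xb
  have hB : HasFDerivAt (fun z => ⟪gradient f z, yb - z⟫)
      ((fderivInnerCLM ℝ (gradient f xb, yb - xb)).comp
        ((fderiv ℝ (gradient f) xb).prod
          ((0 : EuclideanSpace ℝ (Fin n) →L[ℝ] EuclideanSpace ℝ (Fin n))
            - ContinuousLinearMap.id ℝ _))) xb :=
    hG.inner ℝ ((hasFDerivAt_const yb xb).sub (hasFDerivAt_id xb))
  have hid : HasFDerivAt (fun z : EuclideanSpace ℝ (Fin n) => z - yb)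
      (ContinuousLinearMap.id ℝ _) xb := (hasFDerivAt_id xb).sub_const yb
  have hN : HasFDerivAt (fun z : EuclideanSpace ℝ (Fin n) => ‖z - yb‖ ^ p)
      (((p * ‖xb - yb‖ ^ (p - 2)) • innerSL ℝ (xb - yb)).comp
        (ContinuousLinearMap.id ℝ _)) xb := by
    have := (hasFDerivAt_norm_rpow (xb - yb) hp).comp xb hid
    exact this
  have hh : HasFDerivAt h
      (innerSL ℝ (fderiv ℝ (gradient f) xb (yb - xb) + s • (xb - yb))) xb := by
    have h6 := (((hf xb).hasFDerivAt.add (hB)).add (hN.const_mul c)).add_const r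
    refine h6.congr_fderiv ?_
    ext v
    simp only [ContinuousLinearMap.add_apply, ContinuousLinearMap.coe_smul', Pi.smul_apply,
      ContinuousLinearMap.coe_comp', Function.comp_apply, ContinuousLinearMap.prod_apply,
      ContinuousLinearMap.sub_apply, ContinuousLinearMap.zero_apply,
      ContinuousLinearMap.coe_id', id_eq, fderivInnerCLM_apply, innerSL_apply_apply, smul_eq_mul,
      inner_add_left, real_inner_smul_left]
    rw [hfderiv_inner v, hsym v (yb - xb)]
    simp only [zero_sub, inner_neg_right]
    field_simp
    ring_nf
    rw [show c * p = 1 / γ by rw [hc]; field_simp, show (-2 + p) = p - 2 by ring, hs, hw0]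
    ring
  have hηeq : η = fderiv ℝ (gradient f) xb (yb - xb) + s • (xb - yb) :=
    eq_grad_of_frechet_ineq h xb _ η hh hreal
  refine ⟨hηeq, ⟨s • (xb - yb) - w0, ?_, ?_⟩⟩
  · exact ⟨fun _ => yb, fun _ => s • (xb - yb) - w0, fun _ => hζ0,
      tendsto_const_nhds, tendsto_const_nhds, tendsto_const_nhds⟩
  · rw [hηeq, hw0]
    abel
end

section
/- Let p > 1, γ > 0, let f : ℝ^n → ℝ be twice continuously differentiable, let g : ℝ^n → ℝ ∪ {+∞} be proper and lsc, and suppose the high-order forward–backward splitting mapping T_γ(x) := argmin_y { f(x) + ⟨∇f(x), y − x⟩ + g(y) + (1/(pγ))‖x − y‖^p } is single-valued and continuous on an open ball B(0;r). Then the high-order forward–backward envelope F_γ is continuously differentiable on B(0;r), and for each x̄ ∈ B(0;r) with ȳ = T_γ(x̄), ∇F_γ(x̄) = ∇²f(x̄)(ȳ − x̄) + (1/γ)‖x̄ − ȳ‖^{p-2}(x̄ − ȳ). -/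
open Real Metric InnerProductSpace Asymptotics Filter Topology
open scoped RealInnerProductSpace

namespace Stmt17

variable {E : Type*} [NormedAddCommGroup E] [InnerProductSpace ℝ E] [CompleteSpace E]

theorem contDiff_gradient (f : E → ℝ) (hf : ContDiff ℝ 2 f) : ContDiff ℝ 1 (gradient f) :=
  ((toDual ℝ E).symm.contDiff).comp (hf.fderiv_right (by norm_num))

theorem inner_gradient (f : E → ℝ) (x u : E) : ⟪gradient f x, u⟫ = fderiv ℝ f x u :=
  toDual_symm_apply

theorem hessian_symm (f : E → ℝ) (hf : ContDiff ℝ 2 f) (x u w : E) :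
    ⟪fderiv ℝ (gradient f) x u, w⟫ = ⟪fderiv ℝ (gradient f) x w, u⟫ := by
  have hsymm := (hf.contDiffAt (x := x)).isSymmSndFDerivAt (by simp [minSmoothness_of_isRCLikeNormedField])
  have key : ∀ z, fderiv ℝ (gradient f) x z = (toDual ℝ E).symm (fderiv ℝ (fderiv ℝ f) x z) := by
    intro z
    have : gradient f = (toDual ℝ E).symm ∘ (fderiv ℝ f) := rfl
    rw [this, LinearIsometryEquiv.comp_fderiv]
    rfl
  rw [key u, key w, toDual_symm_apply, toDual_symm_apply]
  exact hsymm.eq u w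

theorem continuous_rpow_smul {p : ℝ} (hp : 1 < p) :
    Continuous (fun w : E => ‖w‖ ^ (p - 2) • w) := by
  have hp0 : p ≠ 0 := by positivity
  have hrw : (fun w : E => ‖w‖ ^ (p - 2) • w)
      = fun w => (1 / p) • ((toDual ℝ E).symm (fderiv ℝ (fun u : E => ‖u‖ ^ p) w)) := by
    funext w
    rw [fderiv_norm_rpow w hp]
    have h1 : ((innerSL ℝ) w : StrongDual ℝ E) = toDual ℝ E w := rfl
    rw [map_smulₛₗ, h1, LinearIsometryEquiv.symm_apply_apply, starRingEnd_apply, star_trivial,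
      smul_smul]
    congr 1
    field_simp
  rw [hrw]
  exact (((toDual ℝ E).symm.continuous.comp
    ((contDiff_norm_rpow hp).continuous_fderiv one_ne_zero))).const_smul (1 / p)

/-- The smooth part of the model function. -/
noncomputable def hfun (p γ : ℝ) (f : E → ℝ) (x y : E) : ℝ :=
  f x + ⟪gradient f x, y - x⟫ + 1 / (p * γ) * ‖x - y‖ ^ p

theorem main (p : ℝ) (hp : 1 < p) (γ : ℝ) (hγ : 0 < γ)
    (f : E → ℝ) (hf : ContDiff ℝ 2 f)
    (g : E → EReal)
    (hproper_top : ∃ x, g x ≠ ⊤) (hproper_bot : ∀ x, g x ≠ ⊥)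
    (r : ℝ)
    (T : E → E)
    (hTcont : ContinuousOn T (ball (0 : E) r))
    (hTmin : ∀ x ∈ ball (0 : E) r,
      (∀ z : E,
        ((f x + ⟪gradient f x, T x - x⟫ + 1 / (p * γ) * ‖x - T x‖ ^ p : ℝ) : EReal) + g (T x) ≤
        ((f x + ⟪gradient f x, z - x⟫ + 1 / (p * γ) * ‖x - z‖ ^ p : ℝ) : EReal) + g z)) :
    ∃ F : E → ℝ,
      (∀ x ∈ ball (0 : E) r,
        ((F x : ℝ) : EReal) = ⨅ y : E,
          ((f x + ⟪gradient f x, y - x⟫ + 1 / (p * γ) * ‖x - y‖ ^ p : ℝ) : EReal) + g y) ∧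
      ContDiffOn ℝ 1 F (ball (0 : E) r) ∧
      ∀ x ∈ ball (0 : E) r,
        HasGradientAt F
          (fderiv ℝ (gradient f) x (T x - x) + (1 / γ * ‖x - T x‖ ^ (p - 2)) • (x - T x)) x := by
  have hp0 : p ≠ 0 := by positivity
  have hγ0 : γ ≠ 0 := ne_of_gt hγ
  obtain ⟨x₀, hgx₀⟩ := hproper_top
  -- finiteness of `g (T x)` on the ball
  have hfin : ∀ x ∈ ball (0 : E) r, g (T x) = ((g (T x)).toReal : EReal) := by
    intro x hx
    have h1 : ((hfun p γ f x (T x) : ℝ) : EReal) + g (T x) ≤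
        ((hfun p γ f x x₀ : ℝ) : EReal) + g x₀ := (hTmin x hx) x₀
    have htop : g (T x) ≠ ⊤ := by
      intro hT
      rw [hT, EReal.coe_add_top, top_le_iff] at h1
      have : g x₀ = ⊤ := by
        by_contra hne
        exact absurd h1 (EReal.add_lt_top (EReal.coe_ne_top _) hne).ne
      exact hgx₀ this
    exact (EReal.coe_toReal htop (hproper_bot _)).symm
  set F : E → ℝ := fun x => hfun p γ f x (T x) + (g (T x)).toReal with hF
  -- the key comparison inequality, in ℝ
  have hkey : ∀ x ∈ ball (0 : E) r, ∀ x' ∈ ball (0 : E) r,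
      F x ≤ hfun p γ f x (T x') + (g (T x')).toReal := by
    intro x hx x' hx'
    have h1 : ((hfun p γ f x (T x) : ℝ) : EReal) + g (T x) ≤
        ((hfun p γ f x (T x') : ℝ) : EReal) + g (T x') := (hTmin x hx) (T x')
    rw [hfin x hx, hfin x' hx', ← EReal.coe_add, ← EReal.coe_add] at h1
    exact_mod_cast h1
  -- the gradient at each point of the ball
  have key : ∀ x ∈ ball (0 : E) r,
      HasGradientAt F
        (fderiv ℝ (gradient f) x (T x - x) + (1 / γ * ‖x - T x‖ ^ (p - 2)) • (x - T x)) x := by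
    intro xb hxb
    set yb := T xb with hyb
    set v := fderiv ℝ (gradient f) xb (yb - xb) + (1 / γ * ‖xb - yb‖ ^ (p - 2)) • (xb - yb)
      with hv
    -- Step B : gradient of the partial function `x ↦ hfun p γ f x yb` at `xb`
    have hdf : HasFDerivAt f (fderiv ℝ f xb) xb :=
      ((hf.differentiable (by norm_num)) xb).hasFDerivAt
    have hdG : HasFDerivAt (gradient f) (fderiv ℝ (gradient f) xb) xb :=
      (((contDiff_gradient f hf).differentiable one_ne_zero) xb).hasFDerivAt
    have hinner : HasFDerivAt (fun x => ⟪gradient f x, yb - x⟫)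
        ((fderivInnerCLM ℝ (gradient f xb, yb - xb)).comp
          ((fderiv ℝ (gradient f) xb).prod (-(ContinuousLinearMap.id ℝ E)))) xb := by
      have h2 : HasFDerivAt (fun x : E => yb - x) (-(ContinuousLinearMap.id ℝ E)) xb :=
        (hasFDerivAt_id xb).const_sub yb
      exact hdG.inner ℝ h2
    have hnorm : HasFDerivAt (fun x : E => 1 / (p * γ) * ‖x - yb‖ ^ p)
        ((1 / (p * γ)) • (((p * ‖xb - yb‖ ^ (p - 2)) • innerSL ℝ (xb - yb)).comp
          (ContinuousLinearMap.id ℝ E))) xb := by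
      have h2 : HasFDerivAt (fun x : E => x - yb) (ContinuousLinearMap.id ℝ E) xb :=
        (hasFDerivAt_id xb).sub_const yb
      exact ((hasFDerivAt_norm_rpow (xb - yb) hp).comp xb h2).const_mul (1 / (p * γ))
    have hBfd : HasFDerivAt (fun x => hfun p γ f x yb)
        (fderiv ℝ f xb
          + ((fderivInnerCLM ℝ (gradient f xb, yb - xb)).comp
              ((fderiv ℝ (gradient f) xb).prod (-(ContinuousLinearMap.id ℝ E))))
          + (1 / (p * γ)) • (((p * ‖xb - yb‖ ^ (p - 2)) • innerSL ℝ (xb - yb)).comp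
              (ContinuousLinearMap.id ℝ E))) xb := (hdf.add hinner).add hnorm
    have hBgrad : HasGradientAt (fun x => hfun p γ f x yb) v xb := by
      rw [hasGradientAt_iff_hasFDerivAt]
      refine (hBfd.congr_fderiv ?_ : _)
      symm
      apply ContinuousLinearMap.ext
      intro u
      simp only [toDual_apply_apply, ContinuousLinearMap.add_apply, ContinuousLinearMap.comp_apply,
        ContinuousLinearMap.prod_apply, ContinuousLinearMap.smul_apply,
        ContinuousLinearMap.coe_id', id_eq, ContinuousLinearMap.neg_apply,
        fderivInnerCLM_apply, innerSL_apply_apply, smul_eq_mul, hv]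
      rw [inner_add_left, real_inner_smul_left]
      rw [← inner_gradient f xb u]
      rw [hessian_symm f hf xb (yb - xb) u]
      rw [inner_neg_right]
      field_simp
      ring
    -- Step A : strict differentiability of the full model function
    have hΦ : ContDiff ℝ 1 (fun q : E × E => hfun p γ f q.1 q.2) := by
      apply ContDiff.add
      apply ContDiff.add
      · exact (hf.of_le (by norm_num)).comp contDiff_fst
      · exact ContDiff.inner ℝ ((contDiff_gradient f hf).comp contDiff_fst)
          (contDiff_snd.sub contDiff_fst)
      · exact contDiff_const.mul ((contDiff_norm_rpow hp).comp (contDiff_fst.sub contDiff_snd))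
    set L := fderiv ℝ (fun q : E × E => hfun p γ f q.1 q.2) (xb, yb) with hL
    have hstrict : HasStrictFDerivAt (fun q : E × E => hfun p γ f q.1 q.2) L (xb, yb) :=
      (hΦ.contDiffAt).hasStrictFDerivAt one_ne_zero
    have hcompfd : HasFDerivAt (fun x => hfun p γ f x yb)
        (L.comp ((ContinuousLinearMap.id ℝ E).prod 0)) xb :=
      HasFDerivAt.comp (f := fun x : E => (x, yb)) xb hstrict.hasFDerivAt (HasFDerivAt.prodMk (hasFDerivAt_id xb) (hasFDerivAt_const yb xb))
    have hLeq : ∀ u : E, L (u, 0) = ⟪v, u⟫ := by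
      intro u
      have h1 := hcompfd.unique hBgrad.hasFDerivAt
      have h2 := congrArg (fun (M : E →L[ℝ] ℝ) => M u) h1
      simpa only [ContinuousLinearMap.comp_apply, ContinuousLinearMap.prod_apply,
        ContinuousLinearMap.coe_id', id_eq, ContinuousLinearMap.zero_apply,
        toDual_apply_apply] using h2
    -- Step D : the sandwich argument
    have hT_at : ContinuousAt T xb := hTcont.continuousAt (isOpen_ball.mem_nhds hxb)
    have htend : Tendsto (fun x => (((x, T x) : E × E), ((xb, T x) : E × E))) (𝓝 xb)
        (𝓝 ((xb, yb), (xb, yb))) := by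
      have hc : ContinuousAt (fun x => (((x, T x) : E × E), ((xb, T x) : E × E))) xb :=
        (continuousAt_id.prodMk hT_at).prodMk (continuousAt_const.prodMk hT_at)
      exact hc.tendsto
    have hO : (fun x => (((x, T x) : E × E) - ((xb, T x) : E × E))) =O[𝓝 xb]
        (fun x => x - xb) := by
      apply isBigO_of_le
      intro x
      simp only [Prod.mk_sub_mk, sub_self, Prod.norm_def, norm_zero]
      simp [max_eq_left (norm_nonneg _)]
    have hB2 : (fun x => hfun p γ f x (T x) - hfun p γ f xb (T x) - ⟪v, x - xb⟫)
        =o[𝓝 xb] (fun x => x - xb) := by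
      have h1 := (hstrict.isLittleO.comp_tendsto htend).trans_isBigO hO
      refine h1.congr_left fun x => ?_
      simp only [Function.comp_apply]
      rw [show ((x, T x) : E × E) - (xb, T x) = (x - xb, 0) by
        rw [Prod.mk_sub_mk, sub_self], hLeq]
    have hA2 : (fun x => hfun p γ f x yb - hfun p γ f xb yb - ⟪v, x - xb⟫)
        =o[𝓝 xb] (fun x => x - xb) := hasGradientAt_iff_isLittleO.mp hBgrad
    rw [hasGradientAt_iff_isLittleO]
    have hub : ∀ᶠ x in 𝓝 xb, ‖F x - F xb - ⟪v, x - xb⟫‖ ≤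
        1 * ‖‖hfun p γ f x yb - hfun p γ f xb yb - ⟪v, x - xb⟫‖
          + ‖hfun p γ f x (T x) - hfun p γ f xb (T x) - ⟪v, x - xb⟫‖‖ := by
      filter_upwards [isOpen_ball.mem_nhds hxb] with x hx
      have hup : F x - F xb ≤ hfun p γ f x yb - hfun p γ f xb yb := by
        have h1 : F x ≤ hfun p γ f x yb + (g yb).toReal := hkey x hx xb hxb
        have h2 : F xb = hfun p γ f xb yb + (g yb).toReal := rfl
        linarith
      have hlo : hfun p γ f x (T x) - hfun p γ f xb (T x) ≤ F x - F xb := by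
        have h1 : F xb ≤ hfun p γ f xb (T x) + (g (T x)).toReal := hkey xb hxb x hx
        have h2 : F x = hfun p γ f x (T x) + (g (T x)).toReal := rfl
        linarith
      have habs : |F x - F xb - ⟪v, x - xb⟫| ≤
          |hfun p γ f x yb - hfun p γ f xb yb - ⟪v, x - xb⟫|
          + |hfun p γ f x (T x) - hfun p γ f xb (T x) - ⟪v, x - xb⟫| := by
        rw [abs_le]
        constructor
        · have h4 := neg_abs_le (hfun p γ f x (T x) - hfun p γ f xb (T x) - ⟪v, x - xb⟫)
          have h3 := abs_nonneg (hfun p γ f x yb - hfun p γ f xb yb - ⟪v, x - xb⟫)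
          linarith
        · have h4 := le_abs_self (hfun p γ f x yb - hfun p γ f xb yb - ⟪v, x - xb⟫)
          have h3 := abs_nonneg (hfun p γ f x (T x) - hfun p γ f xb (T x) - ⟪v, x - xb⟫)
          linarith
      have hnn : (0:ℝ) ≤ ‖hfun p γ f x yb - hfun p γ f xb yb - ⟪v, x - xb⟫‖
          + ‖hfun p γ f x (T x) - hfun p γ f xb (T x) - ⟪v, x - xb⟫‖ := by positivity
      rw [one_mul, Real.norm_eq_abs, Real.norm_of_nonneg hnn, Real.norm_eq_abs, Real.norm_eq_abs]
      exact habs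
    exact (IsBigO.of_bound 1 hub).trans_isLittleO (hA2.norm_left.add hB2.norm_left)
  refine ⟨F, ?_, ?_, key⟩
  · -- value of the envelope
    intro x hx
    have hcoe : ((F x : ℝ) : EReal) = ((hfun p γ f x (T x) : ℝ) : EReal) + g (T x) := by
      rw [hfin x hx, ← EReal.coe_add]
    refine le_antisymm (le_iInf fun y => ?_) ?_
    · rw [hcoe]; exact (hTmin x hx) y
    · exact iInf_le_of_le (T x) (le_of_eq hcoe.symm)
  · -- C¹ smoothness
    have hone : (1 : WithTop ℕ∞) = 0 + 1 := by norm_num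
    rw [hone, contDiffOn_succ_iff_fderiv_of_isOpen isOpen_ball]
    refine ⟨fun x hx => ((key x hx).differentiableAt).differentiableWithinAt, ?_, ?_⟩
    · intro h; exact absurd h (by norm_num)
    · rw [contDiffOn_zero]
      have hveq : ∀ x ∈ ball (0 : E) r, fderiv ℝ F x = toDual ℝ E
          (fderiv ℝ (gradient f) x (T x - x) + (1 / γ * ‖x - T x‖ ^ (p - 2)) • (x - T x)) :=
        fun x hx => (key x hx).hasFDerivAt.fderiv
      have hvcont : ContinuousOn (fun x =>
          fderiv ℝ (gradient f) x (T x - x) + (1 / γ * ‖x - T x‖ ^ (p - 2)) • (x - T x))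
          (ball (0 : E) r) := by
        apply ContinuousOn.add
        · exact (((contDiff_gradient f hf).continuous_fderiv one_ne_zero).continuousOn).clm_apply
            (hTcont.sub continuousOn_id)
        · have hrw : (fun x : E => (1 / γ * ‖x - T x‖ ^ (p - 2)) • (x - T x))
              = fun x => (1 / γ) • (‖x - T x‖ ^ (p - 2) • (x - T x)) := by
            funext x; rw [mul_smul]
          rw [hrw]
          exact (((continuous_rpow_smul hp).comp_continuousOn
            (continuousOn_id.sub hTcont))).const_smul (1 / γ)
      exact (((toDual ℝ E).continuous.comp_continuousOn hvcont)).congr hveq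

end Stmt17

/-- If the HiFBS mapping is single-valued (with values given by `T`) and continuous
on `B(0;r)`, then HiFBE is continuously differentiable there, with
`∇F_γ(x) = ∇²f(x)(T x − x) + (1/γ)‖x − T x‖^{p-2}(x − T x)`. -/
theorem stmt17 (n : ℕ) (p : ℝ) (hp : 1 < p) (γ : ℝ) (hγ : 0 < γ)
    (f : EuclideanSpace ℝ (Fin n) → ℝ) (hf : ContDiff ℝ 2 f)
    (g : EuclideanSpace ℝ (Fin n) → EReal)
    (hproper_top : ∃ x, g x ≠ ⊤) (hproper_bot : ∀ x, g x ≠ ⊥)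
    (hlsc : LowerSemicontinuous g)
    (r : ℝ) (hr : 0 < r)
    (T : EuclideanSpace ℝ (Fin n) → EuclideanSpace ℝ (Fin n))
    (hTcont : ContinuousOn T (ball (0 : EuclideanSpace ℝ (Fin n)) r))
    -- `T x` is the unique minimizer defining `T_γ(x)`, for every `x ∈ B(0;r)`:
    (hTmin : ∀ x ∈ ball (0 : EuclideanSpace ℝ (Fin n)) r,
      (∀ z : EuclideanSpace ℝ (Fin n),
        ((f x + ⟪gradient f x, T x - x⟫ + 1 / (p * γ) * ‖x - T x‖ ^ p : ℝ) : EReal) + g (T x) ≤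
        ((f x + ⟪gradient f x, z - x⟫ + 1 / (p * γ) * ‖x - z‖ ^ p : ℝ) : EReal) + g z) ∧
      (∀ y : EuclideanSpace ℝ (Fin n),
        (∀ z : EuclideanSpace ℝ (Fin n),
          ((f x + ⟪gradient f x, y - x⟫ + 1 / (p * γ) * ‖x - y‖ ^ p : ℝ) : EReal) + g y ≤
          ((f x + ⟪gradient f x, z - x⟫ + 1 / (p * γ) * ‖x - z‖ ^ p : ℝ) : EReal) + g z) →
        y = T x)) :
    ∃ F : EuclideanSpace ℝ (Fin n) → ℝ,
      (∀ x ∈ ball (0 : EuclideanSpace ℝ (Fin n)) r,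
        ((F x : ℝ) : EReal) = ⨅ y : EuclideanSpace ℝ (Fin n),
          ((f x + ⟪gradient f x, y - x⟫ + 1 / (p * γ) * ‖x - y‖ ^ p : ℝ) : EReal) + g y) ∧
      ContDiffOn ℝ 1 F (ball (0 : EuclideanSpace ℝ (Fin n)) r) ∧
      ∀ x ∈ ball (0 : EuclideanSpace ℝ (Fin n)) r,
        HasGradientAt F
          (fderiv ℝ (gradient f) x (T x - x) + (1 / γ * ‖x - T x‖ ^ (p - 2)) • (x - T x)) x :=
  Stmt17.main p hp γ hγ f hf g hproper_top hproper_bot r T hTcont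
    (fun x hx => (hTmin x hx).1)
end

section
/- Let f : ℝ^n → ℝ have ν-Hölder continuous gradient with constant L_ν, ν ∈ (0,1], p = 1 + ν, g proper lsc, φ := f + g, and suppose x̄ = 0 is a p-calm point of φ with constant M > 0 and φ(x̄) = 0. Then for every γ ∈ (0, min{2^{-p}/(Mp), 1/(2L_ν), γ^{g,p}}) and every x ∈ ℝ^n, the high-order forward–backward envelope satisfies F_γ(x) ≤ (3/(pγ)) ‖x‖^p. -/
open Real
open scoped RealInnerProductSpace

theorem aux_descent (n : ℕ) (ν L : ℝ) (hν0 : 0 < ν)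
    (f : EuclideanSpace ℝ (Fin n) → ℝ) (hf : Differentiable ℝ f)
    (hH : ∀ x y : EuclideanSpace ℝ (Fin n),
      ‖gradient f y - gradient f x‖ ≤ L * ‖y - x‖ ^ ν)
    (x : EuclideanSpace ℝ (Fin n)) :
    f x - f 0 - ⟪gradient f x, x⟫ ≤ L * ‖x‖ ^ ν * ‖x‖ := by
  by_cases hx : x = (0 : EuclideanSpace ℝ (Fin n))
  · subst hx
    simp [Real.zero_rpow (ne_of_gt hν0)]
  have hLnn' : 0 ≤ L := by
    have h0 := (norm_nonneg (gradient f 0 - gradient f x)).trans (hH x 0)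
    have hpos : (0:ℝ) < ‖(0:EuclideanSpace ℝ (Fin n)) - x‖ ^ ν :=
      Real.rpow_pos_of_pos (by simpa using norm_pos_iff.2 hx) ν
    nlinarith
  have hderiv : ∀ y ∈ segment ℝ (0 : EuclideanSpace ℝ (Fin n)) x,
      HasFDerivWithinAt (fun y => f y - ⟪gradient f x, y⟫)
        ((InnerProductSpace.toDual ℝ (EuclideanSpace ℝ (Fin n)) (gradient f y)) -
          (InnerProductSpace.toDual ℝ (EuclideanSpace ℝ (Fin n)) (gradient f x)))
        (segment ℝ (0 : EuclideanSpace ℝ (Fin n)) x) y := by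
    intro y _
    have h1 : HasFDerivAt f
        (InnerProductSpace.toDual ℝ (EuclideanSpace ℝ (Fin n)) (gradient f y)) y :=
      (hf y).hasGradientAt.hasFDerivAt
    have h2 : HasFDerivAt (fun z : EuclideanSpace ℝ (Fin n) => ⟪gradient f x, z⟫)
        (InnerProductSpace.toDual ℝ (EuclideanSpace ℝ (Fin n)) (gradient f x)) y := by
      convert (InnerProductSpace.toDual ℝ (EuclideanSpace ℝ (Fin n)) (gradient f x)).hasFDerivAt
          (x := y) using 1
      funext z
      simp only [InnerProductSpace.toDual_apply_apply]
    exact (h1.sub h2).hasFDerivWithinAt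
  have hbound : ∀ y ∈ segment ℝ (0 : EuclideanSpace ℝ (Fin n)) x,
      ‖(InnerProductSpace.toDual ℝ (EuclideanSpace ℝ (Fin n)) (gradient f y)) -
        (InnerProductSpace.toDual ℝ (EuclideanSpace ℝ (Fin n)) (gradient f x))‖
        ≤ L * ‖x‖ ^ ν := by
    intro y hy
    rw [← map_sub, LinearIsometryEquiv.norm_map]
    have hyx : ‖y - x‖ ≤ ‖x‖ := by
      obtain ⟨a, b, ha, hb, hab, rfl⟩ := hy
      have e : a • (0 : EuclideanSpace ℝ (Fin n)) + b • x - x = (b - 1) • x := by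
        rw [smul_zero, zero_add, sub_smul, one_smul]
      rw [e, norm_smul]
      have hb1 : ‖b - 1‖ ≤ 1 := by
        rw [Real.norm_eq_abs, abs_le]; constructor <;> nlinarith
      calc ‖b - 1‖ * ‖x‖ ≤ 1 * ‖x‖ := by gcongr
        _ = ‖x‖ := one_mul _
    refine (hH x y).trans ?_
    gcongr
  have key := (convex_segment (0 : EuclideanSpace ℝ (Fin n))
      x).norm_image_sub_le_of_norm_hasFDerivWithin_le
    hderiv hbound (left_mem_segment ℝ (0 : EuclideanSpace ℝ (Fin n)) x)
    (right_mem_segment ℝ (0 : EuclideanSpace ℝ (Fin n)) x)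
  have h2 : (f x - ⟪gradient f x, x⟫) - (f 0 - ⟪gradient f x, (0:EuclideanSpace ℝ (Fin n))⟫)
      ≤ L * ‖x‖ ^ ν * ‖x - 0‖ :=
    (le_abs_self _).trans key
  rw [inner_zero_right, sub_zero, sub_zero] at h2
  linarith


/-- Upper bound on HiFBE near a `p`-calm point `xb = 0` with `φ(0) = 0`:
`F_γ(x) ≤ (3/(pγ))‖x‖^p` for all small `γ`. -/
theorem stmt19 (n : ℕ) (ν L : ℝ) (hν : ν ∈ Set.Ioc (0 : ℝ) 1) (hL : 0 < L)
    (f : EuclideanSpace ℝ (Fin n) → ℝ) (hf : Differentiable ℝ f)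
    (hH : ∀ x y : EuclideanSpace ℝ (Fin n),
      ‖gradient f y - gradient f x‖ ≤ L * ‖y - x‖ ^ ν)
    (g : EuclideanSpace ℝ (Fin n) → EReal)
    (hproper_top : ∃ x, g x ≠ ⊤) (hproper_bot : ∀ x, g x ≠ ⊥)
    (hlsc : LowerSemicontinuous g)
    (p : ℝ) (hp : p = 1 + ν)
    (hφ0 : ((f 0 : ℝ) : EReal) + g 0 = 0)
    (M : ℝ) (hM : 0 < M)
    (hcalm : ∀ x : EuclideanSpace ℝ (Fin n), x ≠ 0 →
      (0 : EReal) < ((f x : ℝ) : EReal) + g x + ((M * ‖x‖ ^ p : ℝ) : EReal))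
    (γth : ℝ) (hγth : 0 < γth)
    (hpb : ∀ γ ∈ Set.Ioo (0 : ℝ) γth, ∃ x : EuclideanSpace ℝ (Fin n),
      ⊥ < ⨅ y : EuclideanSpace ℝ (Fin n),
            g y + ((1 / (p * γ) * ‖x - y‖ ^ p : ℝ) : EReal)) :
    ∀ γ : ℝ, 0 < γ → γ < min (min (2 ^ (-p) / (M * p)) (1 / (2 * L))) γth →
      ∀ x : EuclideanSpace ℝ (Fin n),
        (⨅ y : EuclideanSpace ℝ (Fin n),
            ((f x + ⟪gradient f x, y - x⟫ + 1 / (p * γ) * ‖x - y‖ ^ p : ℝ) : EReal) + g y)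
          ≤ ((3 / (p * γ) * ‖x‖ ^ p : ℝ) : EReal) := by
  intro γ hγ0 hγlt x
  obtain ⟨hν0, hν1⟩ := hν
  have hp1 : 1 < p := by linarith
  have hp2 : p ≤ 2 := by linarith
  have hp0 : 0 < p := by linarith
  -- γ < 1/(2L)
  have hγL : γ < 1 / (2 * L) := lt_of_lt_of_le hγlt ((min_le_left _ _).trans (min_le_right _ _))
  -- g 0 = -f 0
  have hbot := hproper_bot 0
  have htop : g 0 ≠ ⊤ := by
    intro h
    rw [h] at hφ0
    simp at hφ0
  have hg0 : g 0 = ((-f 0 : ℝ) : EReal) := by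
    have e := EReal.coe_toReal htop hbot
    rw [← e] at hφ0 ⊢
    rw [← EReal.coe_add] at hφ0
    norm_cast at hφ0 ⊢
    linarith
  refine le_trans (iInf_le _ 0) ?_
  rw [hg0, ← EReal.coe_add, EReal.coe_le_coe_iff]
  have hdesc := aux_descent n ν L hν0 f hf hH x
  have hpow : ‖x‖ ^ ν * ‖x‖ = ‖x‖ ^ p := by
    rw [hp, add_comm, Real.rpow_add' (norm_nonneg x) (by positivity), Real.rpow_one]
  have hinner : ⟪gradient f x, (0 : EuclideanSpace ℝ (Fin n)) - x⟫ =
      -⟪gradient f x, x⟫ := by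
    rw [zero_sub, inner_neg_right]
  have hnorm : ‖x - (0 : EuclideanSpace ℝ (Fin n))‖ = ‖x‖ := by rw [sub_zero]
  rw [hinner, hnorm]
  have hpownn : (0:ℝ) ≤ ‖x‖ ^ p := Real.rpow_nonneg (norm_nonneg x) p
  have hL2 : L ≤ 2 / (p * γ) := by
    rw [lt_div_iff₀ (by positivity)] at hγL
    rw [le_div_iff₀ (by positivity)]
    nlinarith
  have key : L * ‖x‖ ^ p ≤ 2 / (p * γ) * ‖x‖ ^ p := by gcongr
  rw [mul_assoc, hpow] at hdesc
  have h3 : 3 / (p * γ) * ‖x‖ ^ p = 2 / (p * γ) * ‖x‖ ^ p + 1 / (p * γ) * ‖x‖ ^ p := by ring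
  rw [h3]
  linarith
end
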